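/- arXiv:2507.12925 — 2 statements merged into one kernel-verified Lean document; each statement's English description precedes it below -/
import Mathlib

section
/- If during one full pass of EB-BFS every batch 𝔼 satisfies that IM-BFS(T, 𝔼) has the same edge set as the tree T current when the batch is read, then the tree held by EB-BFS at the end of that pass is a BFS-tree of G. -/
namespace BFSFormal

variable {V : Type} [Fintype V] [DecidableEq V]

/-- An ordered rooted tree structure on `V ∪ {r}`, where the dummy root `r`
is represented by `none`.  `parent v = none` means the parent of `v` is `r`;
`children w` lists the children of `w` in sibling order. -/
structure PreTree (V : Type) where
  parent : V → Option V
  children : Option V → List V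

/-- One step of the parent function, with `r` (= `none`) absorbing. -/
def parentStep (T : PreTree V) : Option V → Option V
  | none => none
  | some v => T.parent v

/-- `T` is an ordered spanning tree of the directed graph on `V` with edge set `E`
(augmented with the dummy root `r`): iterating the parent function from any node
reaches `r`; every tree edge `(P v, v)` with `P v ≠ r` lies in `E`; and the
children lists give, without repetition, exactly the children of each node. -/
def IsOST (E : Finset (V × V)) (T : PreTree V) : Prop :=
  (∀ v : V, ∃ k : ℕ, (parentStep T)^[k] (some v) = none) ∧
  (∀ v u : V, T.parent v = some u → (u, v) ∈ E) ∧
  (∀ w : Option V, (T.children w).Nodup) ∧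
  (∀ (w : Option V) (v : V), v ∈ T.children w ↔ T.parent v = w)

/-- Replace each node of a list by its list of children (used to pass from one
level of a subtree to the next, keeping the sibling orders). -/
def expand (T : PreTree V) (L : List V) : List V :=
  L.flatMap fun v => T.children (some v)

/-- The breadth-first listing of the nodes of `T`: for each child `c` of the root `r`
in sibling order, all nodes of the subtree rooted at `c` are listed, in level
(breadth-first) order determined by the sibling orders, before the subtree of any
later child of `r`. -/
def bfoList (T : PreTree V) : List V :=
  (T.children none).flatMap fun c =>
    (List.range (Fintype.card V + 1)).flatMap fun k => (expand T)^[k] [c]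

/-- The breadth-first order of a node of `V` on `T` (the root `r` gets `0`,
the nodes of `V` get `1, …, n` in the order of `bfoList`). -/
def bfo (T : PreTree V) (v : V) : ℕ := (bfoList T).idxOf v + 1

/-- Breadth-first order extended to `V ∪ {r}`, with `bfo r = 0`. -/
def bfoOpt (T : PreTree V) : Option V → ℕ
  | none => 0
  | some v => bfo T v

/-- `(u, v)` is a V-BFS edge with respect to `T`:
`bfo u < bfo v`, `P v ≠ r`, and `bfo u < bfo (P v)`. -/
def IsVBFS (T : PreTree V) (e : V × V) : Prop :=
  bfo T e.1 < bfo T e.2 ∧ T.parent e.2 ≠ none ∧ bfo T e.1 < bfoOpt T (T.parent e.2)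

instance (T : PreTree V) (e : V × V) : Decidable (IsVBFS T e) := by
  unfold IsVBFS; infer_instance

/-- `T` is a BFS-tree of the graph with edge set `E` : it is an ordered spanning
tree of that graph and no edge of `E` is a V-BFS edge with respect to `T`. -/
def IsBFSTree (E : Finset (V × V)) (T : PreTree V) : Prop :=
  IsOST E T ∧ ∀ e ∈ E, ¬ IsVBFS T e

/-- `LLSP E` : the number of edges of a longest simple directed path of the graph
with edge set `E`. -/
noncomputable def LLSP (E : Finset (V × V)) : ℕ :=
  sSup {k : ℕ | ∃ p : List V, p.Nodup ∧ p.Chain' (fun a b => (a, b) ∈ E) ∧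
    p.length = k + 1}

/-- `EL` is an enumeration `e₁, …, e_m` of the edge set `E`. -/
def IsEnum (E : Finset (V × V)) (EL : List (V × V)) : Prop :=
  EL.Nodup ∧ ∀ e : V × V, e ∈ EL ↔ e ∈ E

/-- The initial ordered spanning tree of EE-BFS / EB-BFS: every node of `V` is a
child of `r`, in a fixed sibling order. -/
def IsInitTree (T : PreTree V) : Prop :=
  (∀ v : V, T.parent v = none) ∧ (T.children none).Nodup ∧
  (∀ v : V, v ∈ T.children none) ∧ (∀ v : V, T.children (some v) = [])

/-- Restructuring step of EE-BFS: make `v` the rightmost child of `u` (the parent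
of `v` becomes `u` and `v` is placed last in the sibling order of the children of
`u`), all other parents and sibling orders being unchanged. -/
def restructure (T : PreTree V) (u v : V) : PreTree V where
  parent w := if w = v then some u else T.parent w
  children w :=
    if w = some u then (T.children (some u)).erase v ++ [v]
    else (T.children w).erase v

/-- Scanning a list of edges, EE-BFS style: each scanned edge that is a V-BFS edge
with respect to the current tree triggers a restructuring. -/
def EEscan (EL : List (V × V)) (T : PreTree V) : PreTree V :=
  EL.foldl (fun Tc e => if IsVBFS Tc e then restructure Tc e.1 e.2 else Tc) T

/-- One pass of EE-BFS over the fixed enumeration `EL` of `E`. -/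
def EEstep (EL : List (V × V)) (T : PreTree V) : PreTree V := EEscan EL T

/- ------------------  IM-BFS  ------------------ -/

/-- State of the deterministic BFS of IM-BFS: the FIFO queue, the set of nodes
already enqueued (adopted), and the adoption records `(new parent, child)` in
adoption order. -/
structure BFSState (V : Type) where
  queue : List V
  marked : Finset V
  adopts : List (Option V × V)

/-- Enqueue, with prospective parent `p`, the candidates in order; a node already
enqueued before is ignored (it was adopted the first time it was enqueued). -/
def enq (p : Option V) (cands : List V) (s : BFSState V) : BFSState V :=
  cands.foldl
    (fun s c =>
      if c ∈ s.marked then s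
      else ⟨s.queue ++ [c], insert c s.marked, s.adopts ++ [(p, c)]⟩) s

/-- The main loop of IM-BFS (fuel-based).  When the queue is nonempty, the first
node `u` is dequeued and visited: the children of `u` in `T` (in sibling order)
and then the targets of the edges of `EL` with source `u` (in list order) are
enqueued.  When the queue is empty, the earliest (in sibling order) not yet
enqueued child of `r` in `T` is enqueued with parent `r`; if all nodes have been
enqueued the adoption records are returned. -/
noncomputable def imBFSAux (T : PreTree V) (EL : List (V × V)) :
    ℕ → BFSState V → List (Option V × V)
  | 0, s => s.adopts
  | fuel + 1, s =>
    match s.queue with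
    | u :: rest =>
        let cands := T.children (some u) ++
          (EL.filter fun e => decide (e.1 = u)).map Prod.snd
        imBFSAux T EL fuel (enq (some u) cands ⟨rest, s.marked, s.adopts⟩)
    | [] =>
        match (T.children none).find? (fun c => decide (c ∉ s.marked)) with
        | some c => imBFSAux T EL fuel (enq none [c] s)
        | none =>
            match (Finset.univ : Finset V).toList.find?
                (fun v => decide (v ∉ s.marked)) with
            | some v => imBFSAux T EL fuel (enq none [v] s)
            | none => s.adopts

/-- `imBFS T EL` : the ordered spanning tree produced by the deterministic
breadth-first search, started at `r`, of the graph whose edges are the tree edges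
of `T` together with the edges occurring in the list `EL` (Stipulation 1):
each node's new parent is the node during whose processing it was first enqueued,
and the children of each node are ordered by adoption time. -/
noncomputable def imBFS (T : PreTree V) (EL : List (V × V)) : PreTree V :=
  let ad := imBFSAux T EL (2 * Fintype.card V + 1) ⟨[], ∅, []⟩
  { parent := fun v =>
      match ad.find? (fun pc => decide (pc.2 = v)) with
      | some pc => pc.1
      | none => none
    children := fun w => (ad.filter fun pc => decide (pc.1 = w)).map Prod.snd }

/-- The set of tree edges `(P v, v)` of `T` with `P v ≠ r`. -/
def treeEdges (T : PreTree V) : Finset (V × V) :=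
  Finset.univ.filter fun e : V × V => T.parent e.2 = some e.1

/- ------------------  EB-BFS  ------------------ -/

/-- One pass of EB-BFS (also the map `RE(𝔼₁, …, 𝔼_k)`): replace the current tree
`T` by `IM-BFS(T, 𝔼)` successively for each batch `𝔼`. -/
noncomputable def EBstep (batches : List (List (V × V))) (T : PreTree V) : PreTree V :=
  batches.foldl imBFS T

/-- The pass of EB-BFS over `batches` starting from `T` is one during which every
batch replacement leaves the edge set of the tree unchanged. -/
def CleanPass (batches : List (List (V × V))) (T : PreTree V) : Prop :=
  ∀ j < batches.length,
    (imBFS ((batches.take j).foldl imBFS T) (batches.getD j [])).parent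
      = ((batches.take j).foldl imBFS T).parent

/- ------------------  the sublist S(T, 𝔼)  ------------------ -/

/-- `S T EL` : if `EL` contains no V-BFS edge w.r.t. `T`, the empty list; otherwise,
letting `e₁ = (u₁, v₁)` be the earliest V-BFS edge of `EL` whose tail has minimal
breadth-first order among tails of V-BFS edges of `EL`, the sublist of `EL` (in the
same order) of the edges `(u, v)` at the position of `e₁` or later with
`u ≠ P(v)`, `bfo u ≥ bfo u₁` and `bfo v ≥ bfo u₁`. -/
def S (T : PreTree V) (EL : List (V × V)) : List (V × V) :=
  let vb := EL.filter fun e => decide (IsVBFS T e)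
  match (vb.map fun e => bfo T e.1).min? with
  | none => []
  | some b =>
      (EL.dropWhile fun e => !(decide (IsVBFS T e) && decide (bfo T e.1 = b))).filter
        fun e => decide (T.parent e.2 ≠ some e.1) && decide (b ≤ bfo T e.1)
          && decide (b ≤ bfo T e.2)

/-- The map sending `T` to `T_{k+1}` where `T₁ = T`, `S_j = S(T_j, E_j)` and
`T_{j+1} = IM-BFS(T_j, S_j)` (i.e. `RE(S₁, …, S_k)` with the `S`-lists recomputed
from the successively current trees). -/
noncomputable def reSstep (batches : List (List (V × V))) (T : PreTree V) : PreTree V :=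
  batches.foldl (fun Tc EL => imBFS Tc (S Tc EL)) T

/-- The list `[S₁, …, S_k]` of the sublists computed along the run
`T₁ = T`, `S_j = S(T_j, E_j)`, `T_{j+1} = IM-BFS(T_j, S_j)`. -/
noncomputable def runS (batches : List (List (V × V))) (T : PreTree V) : List (List (V × V)) :=
  (List.range batches.length).map fun j =>
    S (reSstep (batches.take j) T) (batches.getD j [])

/- ------------------  depth and depth'  ------------------ -/

/-- The depth of `v` in `T`: the number of tree edges on the path from `r` to `v`. -/
noncomputable def depth (T : PreTree V) (v : V) : ℕ :=
  sInf {k : ℕ | (parentStep T)^[k] (some v) = none}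

/-- The topmost proper ancestor of `v` (the child of `r` whose subtree contains `v`). -/
noncomputable def topAnc (T : PreTree V) (v : V) : Option V :=
  (parentStep T)^[depth T v - 1] (some v)

/-- `d(T_c)` : the maximum depth in `T` of a node of the subtree of `T` rooted at
the child `c` of `r`. -/
noncomputable def subtreeMaxDepth (T : PreTree V) (c : V) : ℕ :=
  Finset.univ.sup fun u : V => if topAnc T u = some c then depth T u else 0

/-- `depth′(v, T) = Σ_{1 ≤ l ≤ j−1} d(T_l) + depth(v, T)` where `v` belongs to the
subtree `T_j` of the `j`-th child of `r` in sibling order. -/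
noncomputable def depth' (T : PreTree V) (v : V) : ℕ :=
  match topAnc T v with
  | none => depth T v
  | some c =>
      (((T.children none).takeWhile fun x => decide (x ≠ c)).map
        (subtreeMaxDepth T)).sum + depth T v

/- ------------------  node removal (statements 13, 14)  ------------------ -/

/-- The edge set of the induced subgraph `G − u`, on the subtype `{v // v ≠ u}`. -/
def Esub (E : Finset (V × V)) (u : V) :
    Finset ({v : V // v ≠ u} × {v : V // v ≠ u}) :=
  Finset.univ.filter fun e => ((e.1 : V), (e.2 : V)) ∈ E

/-- Extend an ordered spanning tree `T'` of `G − u` to one of `G` by adding `u`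
as the rightmost child of `r`. -/
def extendRight (u : V) (T' : PreTree {v : V // v ≠ u}) : PreTree V where
  parent v := if h : v = u then none else (T'.parent ⟨v, h⟩).map Subtype.val
  children w :=
    match w with
    | none => (T'.children none).map Subtype.val ++ [u]
    | some x =>
        if hx : x = u then []
        else (T'.children (some ⟨x, hx⟩)).map Subtype.val

/-- Extend an ordered spanning tree `T'` of `G − u` to one of `G` by adding `u`
as the leftmost child of `r`. -/
def extendLeft (u : V) (T' : PreTree {v : V // v ≠ u}) : PreTree V where
  parent v := if h : v = u then none else (T'.parent ⟨v, h⟩).map Subtype.val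
  children w :=
    match w with
    | none => u :: (T'.children none).map Subtype.val
    | some x =>
        if hx : x = u then []
        else (T'.children (some ⟨x, hx⟩)).map Subtype.val

end BFSFormal

/-!
If `IM-BFS(T, 𝔼)` gives every node its parent in `T`, the search merely re-traverses `T`:
the queue is always a segment of the breadth-first listing of `T`, the children of `r` are
enqueued in sibling order, and a dequeued node adopts exactly its children, in sibling order.
Hence `IM-BFS(T, 𝔼) = T`, so the tree does not change during a clean pass. Moreover, if
`(u, v) ∈ 𝔼` and `bfo u < bfo (P v)`, then `v` is still unvisited when `u` is processed, so `u`
would adopt it; thus no edge of a batch, hence no edge of `E`, is a V-BFS edge. Finally every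
run of `IM-BFS` on edges of `G` yields an ordered spanning tree of `G`: each node is adopted
after its new parent, along a tree edge or an edge of `𝔼`.
-/

theorem List.find?_eq_some_of_nodup_map {α β : Type*} [DecidableEq β] {f : α → β}
    {l : List α} (hl : (l.map f).Nodup) {a : α} (ha : a ∈ l) :
    l.find? (fun x => decide (f x = f a)) = some a := by
  obtain ⟨as, bs, rfl⟩ := List.append_of_mem ha
  refine List.find?_eq_some_iff_append.2 ⟨by simp, as, bs, rfl, fun x hx => ?_⟩
  have hfa : f a ∉ as.map f := by
    rw [List.map_append, List.map_cons] at hl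
    exact fun h => List.disjoint_of_nodup_append hl h List.mem_cons_self
  simpa using fun h : f x = f a => hfa (h ▸ List.mem_map_of_mem hx)

theorem List.flatMap_range_append_shift {α : Type*} (a b : ℕ → List α) (n : ℕ) :
    (List.range n).flatMap (fun k => a k ++ b k) ++ a n
      = a 0 ++ (List.range n).flatMap fun k => b k ++ a (k + 1) := by
  induction n with
  | zero => simp
  | succ n ih =>
    simp only [List.range_succ, List.flatMap_append, List.flatMap_singleton, List.append_assoc]
    rw [← List.append_assoc, ih, List.append_assoc]

namespace BFSFormal

attribute [ext] PreTree

section LevelOrder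

variable {V : Type}

theorem expand_iterate_append (T : PreTree V) (k : ℕ) (A B : List V) :
    (expand T)^[k] (A ++ B) = (expand T)^[k] A ++ (expand T)^[k] B := by
  induction k generalizing A B with
  | zero => rfl
  | succ k ih =>
    rw [Function.iterate_succ_apply, Function.iterate_succ_apply, Function.iterate_succ_apply,
      ← ih]
    exact congrArg _ List.flatMap_append

theorem expand_iterate_nil (T : PreTree V) (k : ℕ) : (expand T)^[k] [] = [] :=
  Function.iterate_fixed rfl k

theorem exists_of_mem_expand_iterate {T : PreTree V}
    (hiff : ∀ (w : Option V) (v : V), v ∈ T.children w ↔ T.parent v = w)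
    {q : List V} {k : ℕ} {x : V} (hx : x ∈ (expand T)^[k] q) : ∃ y ∈ q, (parentStep T)^[k] (some x) = some y := by
  induction k generalizing x with
  | zero => exact ⟨x, hx, rfl⟩
  | succ k ih =>
    rw [Function.iterate_succ_apply'] at hx
    obtain ⟨u, hu, hxu⟩ := List.mem_flatMap.1 hx
    obtain ⟨y, hy, hky⟩ := ih hu
    refine ⟨y, hy, ?_⟩
    rwa [Function.iterate_succ_apply, parentStep, (hiff _ _).1 hxu]

theorem isOST_of_isInitTree (E : Finset (V × V)) {T : PreTree V} (hT : IsInitTree T) :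
    IsOST E T := by
  obtain ⟨hroot, hnd, hmem, hleaf⟩ := hT
  refine ⟨fun v => ⟨1, by simp [parentStep, hroot v]⟩, fun v u h => by simp [hroot v] at h,
    fun w => ?_, fun w v => ?_⟩
  · cases w with
    | none => exact hnd
    | some u => simp [hleaf u]
  · cases w with
    | none => simp [hmem v, hroot v]
    | some u => simp [hleaf u, hroot v]

variable [Fintype V]

theorem parentStep_iterate_card {T : PreTree V}
    (hreach : ∀ v : V, ∃ k : ℕ, (parentStep T)^[k] (some v) = none) (v : V) :
    (parentStep T)^[Fintype.card V] (some v) = none := by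
  classical
  by_contra hne
  set f := parentStep T
  have hsome : ∀ j ≤ Fintype.card V, f^[j] (some v) ≠ none := fun j hj h => hne <| by
    rw [← Nat.sub_add_cancel hj, Function.iterate_add_apply, h]
    exact Function.iterate_fixed rfl _
  have hk := Nat.find_spec (hreach v)
  have hcard : Fintype.card V < Nat.find (hreach v) := by
    by_contra! hle
    exact hsome _ hle hk
  have hcycle :
      ∀ a b : ℕ, a < b → b ≤ Fintype.card V → f^[a] (some v) ≠ f^[b] (some v) :=
    fun a b hab hb heq => Nat.find_min (hreach v) (m := Nat.find (hreach v) - b + a)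
      (by omega) <| by
        rw [Function.iterate_add_apply, heq, ← Function.iterate_add_apply,
          Nat.sub_add_cancel (by omega), hk]
  let g : Fin (Fintype.card V + 1) → V := fun j =>
    Option.get _ (Option.ne_none_iff_isSome.1 (hsome j (Nat.lt_succ_iff.1 j.2)))
  have hg : ∀ j : Fin (Fintype.card V + 1), f^[j] (some v) = some (g j) := fun j =>
    (Option.some_get _).symm
  obtain ⟨a, b, hab, hgab⟩ := Fintype.exists_ne_map_eq_of_card_lt g (by simp)
  have heq : f^[a] (some v) = f^[b] (some v) := by rw [hg a, hg b, hgab]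
  rcases Nat.lt_or_gt_of_ne (Fin.val_ne_of_ne hab) with h | h
  · exact hcycle a b h (Nat.lt_succ_iff.1 b.2) heq
  · exact hcycle b a h (Nat.lt_succ_iff.1 a.2) heq.symm

theorem expand_iterate_card {E : Finset (V × V)} {T : PreTree V} (hT : IsOST E T) (q : List V) :
    (expand T)^[Fintype.card V] q = [] :=
  List.eq_nil_iff_forall_not_mem.2 fun x hx => by
    obtain ⟨y, -, hy⟩ := exists_of_mem_expand_iterate hT.2.2.2 hx
    rw [parentStep_iterate_card hT.1] at hy
    cases hy

def bfseq (T : PreTree V) (q : List V) : List V :=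
  (List.range (Fintype.card V + 1)).flatMap fun k => (expand T)^[k] q

theorem bfseq_nil (T : PreTree V) : bfseq T [] = [] := by
  simp [bfseq, expand_iterate_nil]

theorem bfseq_cons {E : Finset (V × V)} {T : PreTree V} (hT : IsOST E T) (u : V) (rest : List V) :
    bfseq T (u :: rest) = u :: bfseq T (rest ++ T.children (some u)) := by
  have hshift := List.flatMap_range_append_shift (fun k => (expand T)^[k] [u])
    (fun k => (expand T)^[k] rest) (Fintype.card V + 1)
  rw [Function.iterate_succ_apply, expand_iterate_card hT, List.append_nil] at hshift
  simp only [bfseq, ← expand_iterate_append, List.singleton_append] at hshift ⊢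
  rw [hshift]
  simp only [List.singleton_append, Function.iterate_zero_apply]
  congr 1
  refine List.flatMap_congr fun k _ => ?_
  rw [expand_iterate_append, Function.iterate_succ_apply]
  simp [expand]

end LevelOrder

section Search

variable {V : Type} [DecidableEq V]

def candidates (T : PreTree V) (EL : List (V × V)) (u : V) : List V :=
  T.children (some u) ++ (EL.filter fun e => decide (e.1 = u)).map Prod.snd

/-- The nodes of `l` adopted when `l` is enqueued while `m` is marked: the first occurrences
of the nodes outside `m`. -/
def fresh (m : Finset V) : List V → List V
  | [] => []
  | c :: cs => if c ∈ m then fresh m cs else c :: fresh (insert c m) cs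

theorem mem_fresh {m : Finset V} {l : List V} {x : V} :
    x ∈ fresh m l ↔ x ∈ l ∧ x ∉ m := by
  induction l generalizing m with
  | nil => simp [fresh]
  | cons c cs ih =>
    by_cases hc : c ∈ m <;> by_cases hxc : x = c <;> simp_all [fresh]

theorem nodup_fresh (m : Finset V) (l : List V) : (fresh m l).Nodup := by
  induction l generalizing m with
  | nil => exact List.nodup_nil
  | cons c cs ih =>
    unfold fresh
    split_ifs
    · exact ih m
    · exact List.nodup_cons.2 ⟨fun h => (mem_fresh.1 h).2 (Finset.mem_insert_self c m), ih _⟩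

theorem fresh_eq_self {m : Finset V} {l : List V} (hl : l.Nodup) (hm : ∀ x ∈ l, x ∉ m) :
    fresh m l = l := by
  induction l generalizing m with
  | nil => rfl
  | cons c cs ih =>
    obtain ⟨hc, hcs⟩ := List.nodup_cons.1 hl
    rw [fresh, if_neg (hm c List.mem_cons_self)]
    refine congrArg _ (ih hcs fun x hx => ?_)
    rw [Finset.mem_insert, not_or]
    exact ⟨fun h => hc (h ▸ hx), hm x (List.mem_cons_of_mem c hx)⟩

theorem fresh_append (m : Finset V) (l₁ l₂ : List V) :
    fresh m (l₁ ++ l₂) = fresh m l₁ ++ fresh (m ∪ (fresh m l₁).toFinset) l₂ := by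
  induction l₁ generalizing m with
  | nil => simp [fresh]
  | cons c cs ih =>
    by_cases hc : c ∈ m
    · simp only [List.cons_append, fresh, if_pos hc, ih]
    · simp only [List.cons_append, fresh, if_neg hc, ih, List.toFinset_cons, List.cons_append]
      congr 3
      ext x
      simp only [Finset.mem_union, Finset.mem_insert]
      tauto

theorem enq_eq (p : Option V) (cands : List V) (s : BFSState V) :
    enq p cands s = ⟨s.queue ++ fresh s.marked cands,
      s.marked ∪ (fresh s.marked cands).toFinset,
      s.adopts ++ (fresh s.marked cands).map fun c => (p, c)⟩ := by
  induction cands generalizing s with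
  | nil => simp [enq, fresh]
  | cons c cs ih =>
    by_cases hc : c ∈ s.marked
    · simpa [enq, fresh, hc] using ih s
    · simp only [enq, List.foldl_cons, if_neg hc] at ih ⊢
      rw [ih]
      simp only [fresh, if_neg hc, List.append_assoc, List.cons_append, List.nil_append,
        List.toFinset_cons, List.map_cons, BFSState.mk.injEq, true_and, and_true]
      ext x
      simp only [Finset.mem_union, Finset.mem_insert]
      tauto

theorem enq_of_fresh {p : Option V} {cands : List V} {s : BFSState V} (hc : cands.Nodup)
    (hm : ∀ x ∈ cands, x ∉ s.marked) :
    enq p cands s = ⟨s.queue ++ cands, s.marked ∪ cands.toFinset,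
      s.adopts ++ cands.map fun c => (p, c)⟩ := by
  rw [enq_eq, fresh_eq_self hc hm]

theorem card_marked_enq (p : Option V) (cands : List V) (s : BFSState V) :
    (enq p cands s).marked.card = s.marked.card + (fresh s.marked cands).length := by
  rw [enq_eq, Finset.card_union_of_disjoint, List.toFinset_card_of_nodup (nodup_fresh _ _)]
  exact Finset.disjoint_left.2 fun x hx hx' => (mem_fresh.1 (List.mem_toFinset.1 hx')).2 hx

def BFSState.seen (s : BFSState V) : List V := s.adopts.map Prod.snd

theorem seen_enq (p : Option V) (cands : List V) (s : BFSState V) :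
    (enq p cands s).seen = s.seen ++ fresh s.marked cands := by
  simp [BFSState.seen, enq_eq, Function.comp_def]

structure RunInv (T : PreTree V) (EL : List (V × V)) (s : BFSState V) : Prop where
  nodup : s.seen.Nodup
  marked_eq : s.marked = s.seen.toFinset
  queue_subset : ∀ x ∈ s.queue, x ∈ s.marked
  parent_before : ∀ pc ∈ s.adopts, ∀ u, pc.1 = some u → s.seen.idxOf u < s.seen.idxOf pc.2
  adopt_edge : ∀ pc ∈ s.adopts, ∀ u, pc.1 = some u →
    pc.2 ∈ T.children (some u) ∨ (u, pc.2) ∈ EL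

theorem RunInv.enqueue {T : PreTree V} {EL : List (V × V)} {s : BFSState V} (hs : RunInv T EL s)
    {p : Option V} {cands : List V} (hp : ∀ u, p = some u → u ∈ s.seen)
    (hcands : ∀ u, p = some u → ∀ x ∈ cands, x ∈ T.children (some u) ∨ (u, x) ∈ EL) :
    RunInv T EL (enq p cands s) := by
  set N := fresh s.marked cands
  have hN : ∀ x ∈ N, x ∈ cands ∧ x ∉ s.seen := fun x hx => by
    simpa [hs.marked_eq] using mem_fresh.1 hx
  have hseen := seen_enq p cands s
  have hidx : ∀ x ∈ s.seen, (enq p cands s).seen.idxOf x = s.seen.idxOf x := fun x hx => by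
    rw [hseen, List.idxOf_append_of_mem hx]
  rw [enq_eq]
  rw [enq_eq] at hseen hidx
  refine ⟨?_, ?_, ?_, ?_, ?_⟩
  · rw [hseen]
    exact List.nodup_append.2 ⟨hs.nodup, nodup_fresh _ _,
      fun a ha b hb hab => (hN b hb).2 (hab ▸ ha)⟩
  · rw [hseen, List.toFinset_append, hs.marked_eq]
  · intro x hx
    rcases List.mem_append.1 hx with hx | hx
    · exact Finset.mem_union_left _ (hs.queue_subset x hx)
    · exact Finset.mem_union_right _ (List.mem_toFinset.2 hx)
  · intro pc hpc u hu
    rcases List.mem_append.1 hpc with hpc | hpc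
    · have hlt := hs.parent_before pc hpc u hu
      have hmem : pc.2 ∈ s.seen := List.mem_map_of_mem hpc
      have hu' : u ∈ s.seen :=
        List.idxOf_lt_length_iff.1 (hlt.trans (List.idxOf_lt_length_of_mem hmem))
      rwa [hidx u hu', hidx _ hmem]
    · obtain ⟨c, hc, rfl⟩ := List.mem_map.1 hpc
      have hu' := hp u hu
      rw [hseen, List.idxOf_append_of_mem hu', List.idxOf_append_of_notMem (hN c hc).2]
      exact (List.idxOf_lt_length_of_mem hu').trans_le (Nat.le_add_right _ _)
  · intro pc hpc u hu
    rcases List.mem_append.1 hpc with hpc | hpc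
    · exact hs.adopt_edge pc hpc u hu
    · obtain ⟨c, hc, rfl⟩ := List.mem_map.1 hpc
      exact hcands u hu c (hN c hc).1

variable [Fintype V]

def visit (T : PreTree V) (EL : List (V × V)) (u : V) (rest : List V) (s : BFSState V) :
    BFSState V :=
  enq (some u) (candidates T EL u) ⟨rest, s.marked, s.adopts⟩

noncomputable def bfsStep (T : PreTree V) (EL : List (V × V)) (s : BFSState V) :
    Option (BFSState V) :=
  match s.queue with
  | u :: rest => some (visit T EL u rest s)
  | [] =>
    match (T.children none).find? (fun c => decide (c ∉ s.marked)) with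
    | some c => some (enq none [c] s)
    | none =>
      match (Finset.univ : Finset V).toList.find? (fun v => decide (v ∉ s.marked)) with
      | some v => some (enq none [v] s)
      | none => none

theorem imBFSAux_succ (T : PreTree V) (EL : List (V × V)) (fuel : ℕ) (s : BFSState V) :
    imBFSAux T EL (fuel + 1) s = (bfsStep T EL s).elim s.adopts (imBFSAux T EL fuel) := by
  rw [imBFSAux, bfsStep]
  split <;> [rfl; (split <;> [rfl; (split <;> rfl)])]

/-- The factor `2` makes this drop at a dequeue, which lengthens the queue by as many nodes as
it marks. -/
def meas (s : BFSState V) : ℕ := 2 * (Fintype.card V - s.marked.card) + s.queue.length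

theorem meas_enq_root {c : V} {s : BFSState V} (hc : c ∉ s.marked) :
    meas (enq none [c] s) < meas s := by
  have hlt : s.marked.card < Fintype.card V :=
    Finset.card_lt_univ_of_notMem hc
  have hf : fresh s.marked [c] = [c] := fresh_eq_self (List.nodup_singleton c) (by simpa)
  have hq : (enq none [c] s).queue = s.queue ++ [c] := by rw [enq_eq, hf]
  rw [meas, meas, card_marked_enq, hf, hq, List.length_append]
  simp only [List.length_singleton]
  omega

theorem meas_bfsStep_lt {T : PreTree V} {EL : List (V × V)} {s s' : BFSState V}
    (h : bfsStep T EL s = some s') : meas s' < meas s := by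
  unfold bfsStep at h
  split at h
  · rename_i u rest hq
    cases h
    have hle := Finset.card_le_univ (visit T EL u rest s).marked
    rw [visit, card_marked_enq] at hle
    rw [meas, meas, visit, card_marked_enq, enq_eq, hq]
    simp only [List.length_append, List.length_cons] at hle ⊢
    omega
  all_goals
    repeat' split at h
    all_goals first
      | rename_i hf
        cases h
        have hc := List.find?_some hf
        exact meas_enq_root (of_decide_eq_true hc)
      | cases h

def Reaches (T : PreTree V) (EL : List (V × V)) : BFSState V → BFSState V → Prop :=
  Relation.ReflTransGen fun s s' => bfsStep T EL s = some s'

theorem exists_terminal_of_meas_le (T : PreTree V) (EL : List (V × V)) :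
    ∀ (fuel : ℕ) (s : BFSState V), meas s ≤ fuel →
      ∃ t, Reaches T EL s t ∧ bfsStep T EL t = none ∧ imBFSAux T EL fuel s = t.adopts
  | 0, s, hs => by
    refine ⟨s, Relation.ReflTransGen.refl, ?_, rfl⟩
    cases h : bfsStep T EL s with
    | none => rfl
    | some s' => exact absurd (meas_bfsStep_lt h) (by omega)
  | fuel + 1, s, hs => by
    rw [imBFSAux_succ]
    cases h : bfsStep T EL s with
    | none => exact ⟨s, Relation.ReflTransGen.refl, h, rfl⟩
    | some s' =>
      obtain ⟨t, hst, ht, heq⟩ :=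
        exists_terminal_of_meas_le T EL fuel s' (by have := meas_bfsStep_lt h; omega)
      exact ⟨t, Relation.ReflTransGen.head h hst, ht, heq⟩

noncomputable def adList (T : PreTree V) (EL : List (V × V)) : List (Option V × V) :=
  imBFSAux T EL (2 * Fintype.card V + 1) ⟨[], ∅, []⟩

theorem exists_terminal (T : PreTree V) (EL : List (V × V)) :
    ∃ t, Reaches T EL ⟨[], ∅, []⟩ t ∧ bfsStep T EL t = none ∧ adList T EL = t.adopts :=
  exists_terminal_of_meas_le T EL _ _ (by simp [meas])

theorem terminal_spec {T : PreTree V} {EL : List (V × V)} {t : BFSState V}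
    (h : bfsStep T EL t = none) : t.queue = [] ∧ ∀ v, v ∈ t.marked := by
  unfold bfsStep at h
  split at h
  · cases h
  · rename_i hq
    refine ⟨hq, fun v => ?_⟩
    split at h
    · cases h
    · split at h
      · cases h
      · exact not_not.1 (of_decide_eq_false (Bool.of_not_eq_true
          (List.find?_eq_none.1 ‹_› v (Finset.mem_toList.2 (Finset.mem_univ v)))))

theorem RunInv.step {T : PreTree V} {EL : List (V × V)} {s s' : BFSState V}
    (hs : RunInv T EL s) (h : bfsStep T EL s = some s') : RunInv T EL s' := by
  unfold bfsStep at h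
  split at h
  · rename_i u rest hq
    cases h
    have hu : u ∈ s.seen := by
      simpa [hs.marked_eq] using hs.queue_subset u (by simp [hq])
    have hs' : RunInv T EL ⟨rest, s.marked, s.adopts⟩ :=
      { hs with queue_subset := fun x hx => hs.queue_subset x (by simp [hq, hx]) }
    refine hs'.enqueue (fun u' hu' => by cases hu'; exact hu) fun u' hu' x hx => ?_
    cases hu'
    rcases List.mem_append.1 hx with hx | hx
    · exact Or.inl hx
    · obtain ⟨e, he, rfl⟩ := List.mem_map.1 hx
      obtain ⟨he, he1⟩ := List.mem_filter.1 he
      rw [decide_eq_true_eq] at he1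
      exact Or.inr (he1 ▸ he)
  all_goals
    repeat' split at h
    all_goals first
      | cases h; exact hs.enqueue (fun _ h => nomatch h) fun _ h => nomatch h
      | cases h

theorem runInv_of_reaches {T : PreTree V} {EL : List (V × V)} {s : BFSState V}
    (h : Reaches T EL ⟨[], ∅, []⟩ s) : RunInv T EL s := by
  induction h with
  | refl => exact ⟨by simp [BFSState.seen], by simp [BFSState.seen], by simp, by simp, by simp⟩
  | tail _ hstep ih => exact ih.step hstep

theorem exists_terminal_runInv (T : PreTree V) (EL : List (V × V)) :
    ∃ t, adList T EL = t.adopts ∧ RunInv T EL t ∧ ∀ v, v ∈ t.seen := by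
  obtain ⟨t, hreach, hterm, hadl⟩ := exists_terminal T EL
  have hinv := runInv_of_reaches hreach
  refine ⟨t, hadl, hinv, fun v => ?_⟩
  simpa [hinv.marked_eq] using (terminal_spec hterm).2 v

theorem imBFS_parent_of_mem {T : PreTree V} {EL : List (V × V)} {t : BFSState V}
    (hadl : adList T EL = t.adopts) (hnd : t.seen.Nodup) {pc : Option V × V}
    (hpc : pc ∈ t.adopts) : (imBFS T EL).parent pc.2 = pc.1 := by
  change (match (adList T EL).find? (fun x => decide (x.2 = pc.2)) with
    | some pc => pc.1 | none => none) = pc.1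
  rw [hadl, List.find?_eq_some_of_nodup_map hnd hpc]

theorem imBFS_children (T : PreTree V) (EL : List (V × V)) (w : Option V) :
    (imBFS T EL).children w = ((adList T EL).filter fun pc => decide (pc.1 = w)).map Prod.snd :=
  rfl

theorem imBFS_isOST {E : Finset (V × V)} {T : PreTree V} {EL : List (V × V)} (hT : IsOST E T)
    (hEL : ∀ e ∈ EL, e ∈ E) : IsOST E (imBFS T EL) := by
  obtain ⟨t, hadl, hinv, hall⟩ := exists_terminal_runInv T EL
  have hpar := fun {pc} => imBFS_parent_of_mem hadl hinv.nodup (pc := pc)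
  have hrec : ∀ v, ∃ pc ∈ t.adopts, pc.2 = v := fun v => List.mem_map.1 (hall v)
  have hsome : ∀ v u, (imBFS T EL).parent v = some u →
      ∃ pc ∈ t.adopts, pc.2 = v ∧ pc.1 = some u := fun v u h => by
    obtain ⟨pc, hpc, rfl⟩ := hrec v
    exact ⟨pc, hpc, rfl, (hpar hpc).symm.trans h⟩
  refine ⟨fun v => ?_, fun v u h => ?_, fun w => ?_, fun w v => ?_⟩
  · induction hk : t.seen.idxOf v using Nat.strong_induction_on generalizing v with
    | _ k ih =>
      cases hp : (imBFS T EL).parent v with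
      | none => exact ⟨1, by simp [parentStep, hp]⟩
      | some u =>
        obtain ⟨pc, hpc, rfl, hu⟩ := hsome _ u hp
        obtain ⟨j, hj⟩ := ih _ (hk ▸ hinv.parent_before pc hpc u hu) u rfl
        exact ⟨j + 1, by rwa [Function.iterate_succ_apply, parentStep, hp]⟩
  · obtain ⟨pc, hpc, rfl, hu⟩ := hsome v u h
    rcases hinv.adopt_edge pc hpc u hu with hch | hel
    · exact hT.2.1 _ _ ((hT.2.2.2 _ _).1 hch)
    · exact hEL _ hel
  · rw [imBFS_children, hadl]
    exact (List.filter_sublist.map Prod.snd).nodup hinv.nodup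
  · rw [imBFS_children, hadl, List.mem_map]
    constructor
    · rintro ⟨pc, hpc, rfl⟩
      obtain ⟨hpc, hw⟩ := List.mem_filter.1 hpc
      rw [hpar hpc, of_decide_eq_true hw]
    · intro hv
      obtain ⟨pc, hpc, rfl⟩ := hrec v
      exact ⟨pc, List.mem_filter.2 ⟨hpc, by rw [← hpar hpc, hv]; simp⟩, rfl⟩

theorem EBstep_isOST {E : Finset (V × V)} {batches : List (List (V × V))}
    (hbatches : ∀ b ∈ batches, ∀ e ∈ b, e ∈ E) {T : PreTree V} (hT : IsOST E T) :
    IsOST E (EBstep batches T) := by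
  induction batches generalizing T with
  | nil => exact hT
  | cons b bs ih =>
    exact ih (fun b' hb' => hbatches b' (List.mem_cons_of_mem b hb'))
      (imBFS_isOST hT (hbatches b List.mem_cons_self))

def FollowsParents (T : PreTree V) (ad : List (Option V × V)) : Prop :=
  ∀ pc ∈ ad, pc.1 = T.parent pc.2

/-- The state of a run of `imBFS T EL` that re-traverses `T` itself, after the nodes `done`
have been dequeued and the children `rdone` of the root have been enqueued. -/
structure CleanInv (T : PreTree V) (EL : List (V × V)) (s : BFSState V) (done rdone : List V) :
    Prop where
  adopts_eq : s.adopts = (done ++ s.queue).map fun x => (T.parent x, x)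
  marked_eq : s.marked = (done ++ s.queue).toFinset
  nodup : (done ++ s.queue).Nodup
  roots_prefix : rdone <+: T.children none
  level : done ++ bfseq T s.queue = rdone.flatMap fun c => bfseq T [c]
  parent_mem : ∀ y ∈ done ++ s.queue, ∀ x, T.parent y = some x → x ∈ done
  children_eq : ∀ u ∈ done,
    (done ++ s.queue).filter (fun y => T.parent y = some u) = T.children (some u)
  roots_eq : (done ++ s.queue).filter (fun y => T.parent y = none) = rdone
  edge_order : ∀ u v w, (u, v) ∈ EL → T.parent v = some w → u ∈ done →
    w ∈ done ∧ done.idxOf w ≤ done.idxOf u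

theorem cleanInv_init (T : PreTree V) (EL : List (V × V)) :
    CleanInv T EL ⟨[], ∅, []⟩ [] [] :=
  ⟨rfl, rfl, List.nodup_nil, List.nil_prefix, by simp [bfseq_nil], by simp, by simp, rfl,
    by simp⟩

section Clean

variable {E : Finset (V × V)} {T : PreTree V} {EL : List (V × V)} {s : BFSState V}
  {done rdone : List V}

theorem CleanInv.not_mem_done (hs : CleanInv T EL s done rdone) {u : V} (hu : u ∈ s.queue) :
    u ∉ done := fun h =>
  List.disjoint_of_nodup_append hs.nodup h hu

theorem CleanInv.children_not_mem (hs : CleanInv T EL s done rdone) (hT : IsOST E T) {u x : V}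
    (hu : u ∈ s.queue) (hx : x ∈ T.children (some u)) : x ∉ done ++ s.queue := fun hmem =>
  hs.not_mem_done hu (hs.parent_mem x hmem u ((hT.2.2.2 _ _).1 hx))

/-- Under `FollowsParents`, a node first reached through an edge of `EL` would be adopted by
a node that is not its parent; so the fresh candidates are exactly the children. -/
theorem CleanInv.fresh_candidates (hs : CleanInv T EL s done rdone) (hT : IsOST E T) {u : V}
    {rest : List V} (hq : s.queue = u :: rest)
    (hf : FollowsParents T (visit T EL u rest s).adopts) :
    fresh s.marked (candidates T EL u) = T.children (some u) := by
  have hch : fresh s.marked (T.children (some u)) = T.children (some u) :=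
    fresh_eq_self (hT.2.2.1 _) fun x hx hm =>
      hs.children_not_mem hT (by simp [hq]) hx (by simpa [hs.marked_eq] using hm)
  have hnew : ∀ x ∈ fresh s.marked (candidates T EL u), T.parent x = some u := fun x hx =>
    (hf (some u, x) (by rw [visit, enq_eq]; simp [hx])).symm
  rw [candidates, fresh_append, hch] at hnew ⊢
  refine List.append_right_eq_self.2 (List.eq_nil_iff_forall_not_mem.2 fun x hx => ?_)
  have hxc : x ∈ T.children (some u) :=
    (hT.2.2.2 _ _).2 (hnew x (List.mem_append_right _ hx))
  exact (mem_fresh.1 hx).2 (Finset.mem_union_right _ (List.mem_toFinset.2 hxc))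

theorem CleanInv.edge_order_dequeue (hs : CleanInv T EL s done rdone) (hT : IsOST E T) {u : V}
    {rest : List V} (hq : s.queue = u :: rest)
    (hfr : fresh s.marked (candidates T EL u) = T.children (some u)) {u' v w : V}
    (he : (u', v) ∈ EL) (hv : T.parent v = some w) (hu' : u' ∈ done ++ [u]) :
    w ∈ done ++ [u] ∧ (done ++ [u]).idxOf w ≤ (done ++ [u]).idxOf u' := by
  rcases List.mem_append.1 hu' with hu' | hu'
  · obtain ⟨hw, hle⟩ := hs.edge_order u' v w he hv hu'
    refine ⟨List.mem_append_left _ hw, ?_⟩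
    rwa [List.idxOf_append_of_mem hw, List.idxOf_append_of_mem hu']
  obtain rfl := List.mem_singleton.1 hu'
  by_cases hwu : w = u'
  · subst hwu
    exact ⟨List.mem_append_right _ hu', le_rfl⟩
  have hvseen : v ∈ done ++ s.queue := by
    by_contra hvs
    have hvf : v ∈ fresh s.marked (candidates T EL u') :=
      mem_fresh.2 ⟨List.mem_append_right _ (List.mem_map.2 ⟨(u', v), by simp [he], rfl⟩),
        by simpa [hs.marked_eq] using hvs⟩
    rw [hfr] at hvf
    exact hwu (Option.some_inj.1 (hv.symm.trans ((hT.2.2.2 _ _).1 hvf)))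
  have hw := hs.parent_mem v hvseen w hv
  refine ⟨List.mem_append_left _ hw, ?_⟩
  rw [List.idxOf_append_of_mem hw, List.idxOf_append_of_notMem (hs.not_mem_done (by simp [hq]))]
  exact (List.idxOf_lt_length_of_mem hw).le.trans (Nat.le_add_right _ _)

theorem CleanInv.dequeue (hs : CleanInv T EL s done rdone) (hT : IsOST E T) {u : V}
    {rest : List V} (hq : s.queue = u :: rest)
    (hf : FollowsParents T (visit T EL u rest s).adopts) :
    CleanInv T EL (visit T EL u rest s) (done ++ [u]) rdone := by
  have hfr := hs.fresh_candidates hT hq hf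
  set A := T.children (some u)
  have hA : ∀ x ∈ A, T.parent x = some u := fun x hx => (hT.2.2.2 _ _).1 hx
  have hAnot : ∀ x ∈ A, x ∉ done ++ s.queue := fun x =>
    hs.children_not_mem hT (by simp [hq])
  have hu : u ∉ done := hs.not_mem_done (by simp [hq])
  have hseen : done ++ [u] ++ (rest ++ A) = done ++ s.queue ++ A := by simp [hq]
  rw [visit, enq_eq]
  simp only [hfr]
  refine ⟨?_, ?_, ?_, hs.roots_prefix, ?_, ?_, ?_, ?_, fun u' v w he hv hu' =>
    hs.edge_order_dequeue hT hq hfr he hv hu'⟩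
  · rw [hseen, List.map_append, hs.adopts_eq]
    exact congrArg _ (List.map_congr_left fun x hx => by rw [hA x hx])
  · rw [hseen, List.toFinset_append, hs.marked_eq]
  · rw [hseen]
    exact List.nodup_append.2
      ⟨hs.nodup, hT.2.2.1 _, fun a ha b hb hab => hAnot b hb (hab ▸ ha)⟩
  · rw [List.append_assoc, List.singleton_append, ← bfseq_cons hT, ← hq]
    exact hs.level
  · rw [hseen]
    intro y hy x hx
    rcases List.mem_append.1 hy with hy | hy
    · exact List.mem_append_left _ (hs.parent_mem y hy x hx)
    · rw [hA y hy, Option.some_inj] at hx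
      simp [hx]
  · rw [hseen]
    intro u' hu'
    rw [List.filter_append]
    rcases List.mem_append.1 hu' with hu' | hu'
    · rw [hs.children_eq u' hu', List.append_right_eq_self, List.filter_eq_nil_iff]
      intro x hx
      simp only [hA x hx, Option.some_inj, decide_eq_true_eq]
      rintro rfl
      exact hu hu'
    · obtain rfl := List.mem_singleton.1 hu'
      rw [List.filter_eq_nil_iff.2 fun y hy hpy =>
          hu (hs.parent_mem y hy u' (of_decide_eq_true hpy)),
        List.nil_append, List.filter_eq_self.2 fun x hx => by simp [hA x hx]]
  · rw [hseen, List.filter_append, hs.roots_eq, List.append_right_eq_self,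
      List.filter_eq_nil_iff]
    intro x hx
    simp [hA x hx]

theorem CleanInv.roots_prefix_enqueue (hs : CleanInv T EL s done rdone) (hT : IsOST E T) {c : V}
    (hq : s.queue = []) (hc : (T.children none).find? (fun c => decide (c ∉ s.marked)) = some c) :
    rdone ++ [c] <+: T.children none := by
  have hmarked : ∀ x, x ∈ s.marked ↔ x ∈ done := by simp [hs.marked_eq, hq]
  have hrdone : ∀ x ∈ rdone, x ∈ done := fun x hx => by
    have hx' : x ∈ (done ++ s.queue).filter (fun y => T.parent y = none) := hs.roots_eq ▸ hx
    simpa [hq] using (List.mem_filter.1 hx').1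
  have hcm := List.find?_some hc
  rw [decide_eq_true_eq, hmarked] at hcm
  obtain ⟨rrest, hr⟩ := hs.roots_prefix
  rcases rrest with _ | ⟨c₀, rrest⟩
  · rw [List.append_nil] at hr
    exact absurd (hrdone c (hr ▸ List.mem_of_find?_eq_some hc)) hcm
  have hc₀ : c₀ ∉ done := fun h => by
    have hc₀r : c₀ ∈ rdone := hs.roots_eq ▸ List.mem_filter.2
      ⟨by simp [h], by simpa using (hT.2.2.2 _ _).1 (hr ▸ by simp)⟩
    exact List.disjoint_of_nodup_append (hr ▸ hT.2.2.1 none) hc₀r List.mem_cons_self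
  have hnone : rdone.find? (fun c => decide (c ∉ s.marked)) = none :=
    List.find?_eq_none.2 fun x hx => by simpa [hmarked] using hrdone x hx
  rw [← hr, List.find?_append, hnone, Option.none_or,
    List.find?_cons_of_pos (by simpa [hmarked] using hc₀), Option.some_inj] at hc
  exact ⟨rrest, by rw [← hr, ← hc, List.append_assoc, List.singleton_append]⟩

theorem CleanInv.enqueue_root (hs : CleanInv T EL s done rdone) (hT : IsOST E T) {c : V}
    (hq : s.queue = []) (hc : (T.children none).find? (fun c => decide (c ∉ s.marked)) = some c) :
    CleanInv T EL (enq none [c] s) done (rdone ++ [c]) := by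
  have hpre := hs.roots_prefix_enqueue hT hq hc
  obtain ⟨hadopts, hmarked, hnd, -, hlevel, hpar, hchildren, hroots, hedge⟩ := hs
  simp only [hq, List.append_nil, bfseq_nil] at hadopts hmarked hnd hlevel hpar hchildren hroots
  have hcm := List.find?_some hc
  rw [decide_eq_true_eq] at hcm
  have hroot : T.parent c = none := (hT.2.2.2 _ _).1 (List.mem_of_find?_eq_some hc)
  have hcdone : c ∉ done := by simpa [hmarked] using hcm
  rw [enq_of_fresh (List.nodup_singleton c) (by simpa using hcm)]
  simp only [hq, List.nil_append]
  refine ⟨?_, ?_, ?_, hpre, ?_, ?_, ?_, ?_, hedge⟩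
  · simp [hadopts, hroot]
  · simp [hmarked]
  · exact List.nodup_append.2 ⟨hnd, List.nodup_singleton c,
      fun a ha b hb hab => hcdone (List.mem_singleton.1 hb ▸ hab ▸ ha)⟩
  · rw [hlevel, List.flatMap_append, List.flatMap_singleton]
  · intro y hy x hx
    rcases List.mem_append.1 hy with hy | hy
    · exact hpar y hy x hx
    · rw [List.mem_singleton.1 hy, hroot] at hx
      cases hx
  · intro u hu
    rw [List.filter_append, hchildren u hu]
    simp [hroot]
  · rw [List.filter_append, hroots]
    simp [hroot]

theorem not_followsParents_enq_stray (hT : IsOST E T) {v : V}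
    (hroots : (T.children none).find? (fun c => decide (c ∉ s.marked)) = none)
    (hv : (Finset.univ : Finset V).toList.find? (fun v => decide (v ∉ s.marked)) = some v) :
    ¬ FollowsParents T (enq none [v] s).adopts := fun hf => by
  have hvm := List.find?_some hv
  rw [decide_eq_true_eq] at hvm
  have hroot : T.parent v = none :=
    (hf (none, v) (by rw [enq_of_fresh (List.nodup_singleton v) (by simpa using hvm)]; simp)).symm
  have := List.find?_eq_none.1 hroots v ((hT.2.2.2 _ _).2 hroot)
  simp [hvm] at this

theorem adopts_prefix_of_bfsStep {s' : BFSState V} (h : bfsStep T EL s = some s') :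
    s.adopts <+: s'.adopts := by
  unfold bfsStep at h
  repeat' split at h
  all_goals first
    | cases h; rw [visit, enq_eq]; exact List.prefix_append _ _
    | cases h; rw [enq_eq]; exact List.prefix_append _ _
    | cases h

theorem CleanInv.step (hs : CleanInv T EL s done rdone) (hT : IsOST E T) {s' : BFSState V}
    (h : bfsStep T EL s = some s') (hf : FollowsParents T s'.adopts) :
    ∃ done' rdone', CleanInv T EL s' done' rdone' := by
  unfold bfsStep at h
  split at h
  · cases h
    exact ⟨_, _, hs.dequeue hT ‹_› hf⟩
  · split at h
    · cases h
      exact ⟨_, _, hs.enqueue_root hT ‹_› ‹_›⟩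
    · split at h
      · cases h
        exact absurd hf (not_followsParents_enq_stray hT ‹_› ‹_›)
      · cases h

theorem exists_cleanInv_of_reaches (hT : IsOST E T) (h : Reaches T EL ⟨[], ∅, []⟩ s)
    (hf : FollowsParents T s.adopts) : ∃ done rdone, CleanInv T EL s done rdone := by
  induction h with
  | refl => exact ⟨[], [], cleanInv_init T EL⟩
  | tail _ hstep ih =>
    obtain ⟨done, rdone, hs⟩ :=
      ih fun pc hpc => hf pc ((adopts_prefix_of_bfsStep hstep).subset hpc)
    exact hs.step hT hstep hf

theorem CleanInv.terminal (hs : CleanInv T EL s done rdone) (hT : IsOST E T)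
    (h : bfsStep T EL s = none) :
    s.queue = [] ∧ rdone = T.children none ∧ done = bfoList T ∧ ∀ v, v ∈ done := by
  obtain ⟨hq, hall⟩ := terminal_spec h
  have hdone : ∀ v, v ∈ done := fun v => by simpa [hs.marked_eq, hq] using hall v
  obtain ⟨rrest, hr⟩ := hs.roots_prefix
  have hrrest : rrest = [] := List.eq_nil_iff_forall_not_mem.2 fun c hc => by
    have hcr : c ∈ rdone := hs.roots_eq ▸ List.mem_filter.2
      ⟨by simp [hq, hdone c],
        by simpa using (hT.2.2.2 _ _).1 (hr ▸ List.mem_append_right _ hc)⟩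
    exact List.disjoint_of_nodup_append (hr ▸ hT.2.2.1 none) hcr hc
  rw [hrrest, List.append_nil] at hr
  have hlevel := hs.level
  rw [hq, bfseq_nil, List.append_nil, hr] at hlevel
  exact ⟨hq, hr, hlevel, hdone⟩

theorem exists_cleanInv_of_parent_eq (hT : IsOST E T) (h : (imBFS T EL).parent = T.parent) :
    ∃ t, adList T EL = t.adopts ∧ t.queue = [] ∧
      CleanInv T EL t (bfoList T) (T.children none) ∧ ∀ v, v ∈ bfoList T := by
  obtain ⟨t, hreach, hterm, hadl⟩ := exists_terminal T EL
  have hf : FollowsParents T t.adopts := fun pc hpc => by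
    rw [← imBFS_parent_of_mem hadl (runInv_of_reaches hreach).nodup hpc, h]
  obtain ⟨done, rdone, hs⟩ := exists_cleanInv_of_reaches hT hreach hf
  obtain ⟨hq, rfl, rfl, hall⟩ := hs.terminal hT hterm
  exact ⟨t, hadl, hq, hs, hall⟩

theorem imBFS_eq_self_of_parent_eq (hT : IsOST E T) (h : (imBFS T EL).parent = T.parent) :
    imBFS T EL = T := by
  obtain ⟨t, hadl, hq, hs, hall⟩ := exists_cleanInv_of_parent_eq hT h
  have hroots := hs.roots_eq
  have hchildren := hs.children_eq
  rw [hq, List.append_nil] at hroots hchildren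
  ext1
  · exact h
  · funext w
    rw [imBFS_children, hadl, hs.adopts_eq, hq, List.append_nil, List.filter_map, List.map_map]
    cases w with
    | none => simpa [Function.comp_def] using hroots
    | some u => simpa [Function.comp_def] using hchildren u (hall u)

theorem not_isVBFS_of_parent_eq (hT : IsOST E T) (h : (imBFS T EL).parent = T.parent)
    {e : V × V} (he : e ∈ EL) : ¬ IsVBFS T e := by
  obtain ⟨t, -, -, hs, hall⟩ := exists_cleanInv_of_parent_eq hT h
  rintro ⟨-, hpar, hlt⟩
  obtain ⟨w, hw⟩ := Option.ne_none_iff_exists'.1 hpar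
  have hle := (hs.edge_order e.1 e.2 w he hw (hall _)).2
  rw [hw, bfoOpt, bfo, bfo] at hlt
  omega

end Clean

theorem foldl_take_imBFS_eq_self_of_cleanPass {E : Finset (V × V)} {T : PreTree V}
    {batches : List (List (V × V))} (hT : IsOST E T) (hclean : CleanPass batches T) {j : ℕ}
    (hj : j ≤ batches.length) : (batches.take j).foldl imBFS T = T := by
  induction j with
  | zero => rfl
  | succ j ih =>
    have hpar := hclean j hj
    rw [ih (by omega), List.getD_eq_getElem?_getD, List.getElem?_eq_getElem hj] at hpar
    rw [List.take_add_one, List.foldl_append, ih (by omega), List.getElem?_eq_getElem hj]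
    exact imBFS_eq_self_of_parent_eq hT hpar

end Search

theorem stmt3_general {V : Type} [Fintype V] [DecidableEq V]
    (E : Finset (V × V))
    (batches : List (List (V × V))) (henum : IsEnum E batches.flatten)
    (T0 : PreTree V) (hT0 : IsInitTree T0)
    (i : ℕ) (hclean : CleanPass batches ((EBstep batches)^[i] T0)) :
    IsBFSTree E (EBstep batches ((EBstep batches)^[i] T0)) := by
  obtain ⟨-, hmem⟩ := henum
  have hbatches : ∀ b ∈ batches, ∀ e ∈ b, e ∈ E := fun b hb e he =>
    (hmem e).1 (List.mem_flatten.2 ⟨b, hb, he⟩)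
  have hT : IsOST E ((EBstep batches)^[i] T0) :=
    Function.Iterate.rec _ (isOST_of_isInitTree E hT0) (fun _ => EBstep_isOST hbatches) i
  have hfix := foldl_take_imBFS_eq_self_of_cleanPass hT hclean le_rfl
  rw [List.take_length] at hfix
  rw [EBstep, hfix]
  refine ⟨hT, fun e he => ?_⟩
  obtain ⟨b, hb, heb⟩ := List.mem_flatten.1 ((hmem e).2 he)
  obtain ⟨j, hj, rfl⟩ := List.getElem_of_mem hb
  have hpar := hclean j hj
  rw [foldl_take_imBFS_eq_self_of_cleanPass hT hclean hj.le, List.getD_eq_getElem?_getD,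
    List.getElem?_eq_getElem hj] at hpar
  exact not_isVBFS_of_parent_eq hT hpar heb

theorem stmt3 {V : Type} [Fintype V] [DecidableEq V]
    (hV : 1 ≤ Fintype.card V) (E : Finset (V × V))
    (hE : ∀ e ∈ E, e.1 ≠ e.2)
    (K : ℕ) (hK : 1 ≤ K)
    (batches : List (List (V × V))) (henum : IsEnum E batches.flatten)
    (hbatch : ∀ b ∈ batches, b.length ≤ K * Fintype.card V)
    (T0 : PreTree V) (hT0 : IsInitTree T0)
    (i : ℕ) (hclean : CleanPass batches ((EBstep batches)^[i] T0)) :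
    IsBFSTree E (EBstep batches ((EBstep batches)^[i] T0)) :=
  stmt3_general E batches henum T0 hT0 i hclean

end BFSFormal
end

section
/- During the run of EE-BFS, for all integers i and j with j > i ≥ 1, every edge e = (u, v) ∈ E such that the tree T current during the j-th pass satisfies depth′(u, T) ≤ i and depth′(v, T) ≤ i is not a V-BFS edge with respect to T. -/
namespace BFSFormal

section Tree

variable {V : Type}

/-- `IsOST` without the requirement that tree edges be edges of the graph. -/
structure IsTree (T : PreTree V) : Prop where
  reachesRoot : ∀ v : V, ∃ k : ℕ, (parentStep T)^[k] (some v) = none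
  nodup_children : ∀ w : Option V, (T.children w).Nodup
  mem_children_iff : ∀ (w : Option V) (v : V), v ∈ T.children w ↔ T.parent v = w

@[simp] theorem parentStep_none (T : PreTree V) : parentStep T none = none := rfl

@[simp] theorem parentStep_some (T : PreTree V) (v : V) :
    parentStep T (some v) = T.parent v := rfl

theorem iterate_parentStep_none (T : PreTree V) (k : ℕ) : (parentStep T)^[k] none = none :=
  Function.iterate_fixed rfl k

variable {T : PreTree V}

theorem iterate_parentStep_eq_none_of_le {x : Option V} {k m : ℕ}
    (h : (parentStep T)^[k] x = none) (hkm : k ≤ m) : (parentStep T)^[m] x = none := by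
  obtain ⟨d, rfl⟩ := Nat.exists_eq_add_of_le hkm
  rw [Nat.add_comm, Function.iterate_add_apply, h, iterate_parentStep_none]

theorem iterate_parentStep_eq_none_iff (hT : IsTree T) {v : V} {k : ℕ} :
    (parentStep T)^[k] (some v) = none ↔ depth T v ≤ k :=
  ⟨fun h => Nat.sInf_le h,
    iterate_parentStep_eq_none_of_le (Nat.sInf_mem (hT.reachesRoot v))⟩

theorem iterate_depth_eq_none (hT : IsTree T) (v : V) :
    (parentStep T)^[depth T v] (some v) = none :=
  (iterate_parentStep_eq_none_iff hT).2 le_rfl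

theorem depth_pos (hT : IsTree T) (v : V) : 0 < depth T v :=
  Nat.pos_of_ne_zero fun h => by simpa [h] using iterate_depth_eq_none hT v

theorem exists_iterate_parentStep_eq_some (hT : IsTree T) {v : V} {k : ℕ}
    (h : k < depth T v) : ∃ x : V, (parentStep T)^[k] (some v) = some x :=
  Option.ne_none_iff_exists'.1 fun hk =>
    (Nat.not_le_of_lt h) ((iterate_parentStep_eq_none_iff hT).1 hk)

theorem depth_eq_add_of_iterate_eq_some (hT : IsTree T) {w v : V} {k : ℕ}
    (h : (parentStep T)^[k] (some w) = some v) : depth T w = depth T v + k := by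
  have shift : ∀ m, (parentStep T)^[m + k] (some w) = (parentStep T)^[m] (some v) := by
    intro m
    rw [Function.iterate_add_apply, h]
  have hv := depth_pos hT v
  have hle : depth T w ≤ depth T v + k := by
    rw [← iterate_parentStep_eq_none_iff hT, shift]
    exact iterate_depth_eq_none hT v
  have hge : ¬ depth T w ≤ depth T v - 1 + k := by
    rw [← iterate_parentStep_eq_none_iff hT, shift, iterate_parentStep_eq_none_iff hT]
    omega
  omega

theorem depth_eq_of_parent_eq_some (hT : IsTree T) {v p : V} (h : T.parent v = some p) :
    depth T v = depth T p + 1 :=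
  depth_eq_add_of_iterate_eq_some hT (k := 1) h

theorem depth_eq_one_iff (hT : IsTree T) {v : V} : depth T v = 1 ↔ T.parent v = none := by
  constructor
  · intro h
    simpa [h] using iterate_depth_eq_none hT v
  · intro h
    exact le_antisymm ((iterate_parentStep_eq_none_iff hT).1 h) (depth_pos hT v)

theorem depth_le_card [Fintype V] (hT : IsTree T) (v : V) : depth T v ≤ Fintype.card V := by
  choose f hf using fun i : Fin (depth T v) => exists_iterate_parentStep_eq_some hT i.2
  -- a repetition `f i = f j` with `i < j` would make the path to the root loop forever
  have hlt : ∀ i j : Fin (depth T v), i < j → f i ≠ f j := by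
    intro i j hij hf_eq
    have hloop : (parentStep T)^[depth T v - j + i] (some v) = none := by
      rw [Function.iterate_add_apply, hf i, hf_eq, ← hf j, ← Function.iterate_add_apply,
        Nat.sub_add_cancel j.2.le]
      exact iterate_depth_eq_none hT v
    have := (iterate_parentStep_eq_none_iff hT).1 hloop
    have : (i : ℕ) < j := hij
    omega
  have hinj : Function.Injective f := by
    intro i j hij
    by_contra hne
    rcases lt_or_gt_of_ne hne with h | h
    · exact hlt i j h hij
    · exact hlt j i h hij.symm
  simpa using Fintype.card_le_of_injective f hinj

theorem topAnc_eq_of_iterate_eq_some (hT : IsTree T) {w v : V} {k : ℕ}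
    (h : (parentStep T)^[k] (some w) = some v) : topAnc T w = topAnc T v := by
  have hv := depth_pos hT v
  unfold topAnc
  rw [depth_eq_add_of_iterate_eq_some hT h, show depth T v + k - 1 = depth T v - 1 + k by omega,
    Function.iterate_add_apply, h]

theorem topAnc_eq_of_parent_eq_some (hT : IsTree T) {v p : V} (h : T.parent v = some p) :
    topAnc T v = topAnc T p :=
  topAnc_eq_of_iterate_eq_some hT (k := 1) h

theorem topAnc_eq_self (hT : IsTree T) {v : V} (h : T.parent v = none) :
    topAnc T v = some v := by
  simp [topAnc, (depth_eq_one_iff hT).2 h]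

theorem exists_topAnc_eq_some (hT : IsTree T) (v : V) :
    ∃ c : V, topAnc T v = some c ∧ T.parent c = none := by
  have hv := depth_pos hT v
  obtain ⟨c, hc⟩ := exists_iterate_parentStep_eq_some hT (Nat.sub_one_lt_of_lt hv)
  refine ⟨c, hc, ?_⟩
  have := iterate_depth_eq_none hT v
  rwa [← Nat.sub_add_cancel hv, Function.iterate_succ_apply', hc] at this

noncomputable def subtreeRoot (T : PreTree V) (v : V) : V := (topAnc T v).getD v

theorem topAnc_eq_subtreeRoot (hT : IsTree T) (v : V) : topAnc T v = some (subtreeRoot T v) := by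
  obtain ⟨c, hc, -⟩ := exists_topAnc_eq_some hT v
  simp [subtreeRoot, hc]

theorem parent_subtreeRoot (hT : IsTree T) (v : V) : T.parent (subtreeRoot T v) = none := by
  obtain ⟨c, hc, hpc⟩ := exists_topAnc_eq_some hT v
  simpa [subtreeRoot, hc] using hpc

theorem subtreeRoot_eq_of_iterate_eq_some (hT : IsTree T) {w v : V} {k : ℕ}
    (h : (parentStep T)^[k] (some w) = some v) : subtreeRoot T w = subtreeRoot T v :=
  Option.some_injective V <| by
    rw [← topAnc_eq_subtreeRoot hT, ← topAnc_eq_subtreeRoot hT,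
      topAnc_eq_of_iterate_eq_some hT h]

theorem subtreeRoot_eq_of_parent_eq_some (hT : IsTree T) {v p : V} (h : T.parent v = some p) :
    subtreeRoot T v = subtreeRoot T p :=
  subtreeRoot_eq_of_iterate_eq_some hT (k := 1) h

/-- `IsAncestor T v w`: `v` lies on the path from `w` to the root (possibly `v = w`). -/
def IsAncestor (T : PreTree V) (v w : V) : Prop :=
  ∃ k : ℕ, (parentStep T)^[k] (some w) = some v

theorem IsAncestor.refl (T : PreTree V) (v : V) : IsAncestor T v v := ⟨0, rfl⟩

theorem IsAncestor.of_parent_eq_some {v b p : V} (hp : T.parent b = some p)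
    (hd : IsAncestor T v p) : IsAncestor T v b := by
  obtain ⟨k, hk⟩ := hd
  exact ⟨k + 1, by rw [Function.iterate_succ_apply, parentStep_some, hp, hk]⟩

theorem IsAncestor.parent_eq_some {v b p : V} (hp : T.parent b = some p)
    (hd : IsAncestor T v b) (hne : b ≠ v) : IsAncestor T v p := by
  obtain ⟨_ | m, hk⟩ := hd
  · exact absurd (Option.some_injective V hk) hne
  · rw [Function.iterate_succ_apply, parentStep_some, hp] at hk
    exact ⟨m, hk⟩

theorem IsAncestor.subtreeRoot_eq (hT : IsTree T) {v w : V} (hd : IsAncestor T v w) :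
    subtreeRoot T w = subtreeRoot T v :=
  subtreeRoot_eq_of_iterate_eq_some hT hd.choose_spec

theorem IsAncestor.depth_le (hT : IsTree T) {v w : V} (hd : IsAncestor T v w) :
    depth T v ≤ depth T w := by
  obtain ⟨k, hk⟩ := hd
  have := depth_eq_add_of_iterate_eq_some hT hk
  omega

end Tree

section Lists

variable {α β : Type*}

theorem idxOf_range {n k : ℕ} (h : k < n) : (List.range n).idxOf k = k := by
  have hlt : (List.range n).idxOf k < (List.range n).length :=
    List.idxOf_lt_length_iff.2 (List.mem_range.2 h)
  have := List.getElem_idxOf hlt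
  rwa [List.getElem_range] at this

theorem flatMap_filter_eq_flatMap {p : α → Bool} {g : α → List β} {l : List α}
    (h : ∀ x ∈ l, p x = false → g x = []) : (l.filter p).flatMap g = l.flatMap g := by
  induction l with
  | nil => rfl
  | cons a l ih =>
    have ih := ih fun x hx => h x (List.mem_cons_of_mem a hx)
    by_cases hpa : p a <;> simp_all

theorem idxOf_flatMap_lt_of_idxOf_lt_of_mem [DecidableEq β] {L : List α} {g : α → List β}
    (hnd : (L.flatMap g).Nodup) {c : α} {x y : β} (hc : c ∈ L) (hx : x ∈ g c) (hy : y ∈ g c)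
    (hxy : (g c).idxOf x < (g c).idxOf y) :
    (L.flatMap g).idxOf x < (L.flatMap g).idxOf y := by
  obtain ⟨s, t, rfl⟩ := List.append_of_mem hc
  rw [List.flatMap_append, List.flatMap_cons] at hnd ⊢
  have hdisj := List.disjoint_of_nodup_append hnd
  have hxs : x ∉ s.flatMap g := fun h => hdisj h (by simp [hx])
  have hys : y ∉ s.flatMap g := fun h => hdisj h (by simp [hy])
  rw [List.idxOf_append_of_notMem hxs, List.idxOf_append_of_notMem hys,
    List.idxOf_append_of_mem hx, List.idxOf_append_of_mem hy]
  omega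

variable [DecidableEq α]

theorem idxOf_append_lt_idxOf_append {l₁ l₂ : List α} (hnd : (l₁ ++ l₂).Nodup)
    {x y : α} (hx : x ∈ l₁) (hy : y ∈ l₂) :
    (l₁ ++ l₂).idxOf x < (l₁ ++ l₂).idxOf y := by
  have hy₁ : y ∉ l₁ := fun h => List.disjoint_of_nodup_append hnd h hy
  rw [List.idxOf_append_of_mem hx, List.idxOf_append_of_notMem hy₁]
  exact Nat.lt_add_right _ (List.idxOf_lt_length_iff.2 hx)

theorem takeWhile_ne_eq_take_idxOf (l : List α) (c : α) :
    l.takeWhile (fun z => decide (z ≠ c)) = l.take (l.idxOf c) := by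
  induction l with
  | nil => rfl
  | cons a l ih =>
    by_cases hac : a = c
    · simp [hac]
    · rw [List.takeWhile_cons_of_pos (by simpa using hac), List.idxOf_cons_ne l hac, ih]
      rfl

theorem idxOf_lt_of_mem_take_idxOf {l : List α} {x c : α} (hx : x ∈ l.take (l.idxOf c)) :
    l.idxOf x < l.idxOf c :=
  (List.mem_take_iff_idxOf_lt (List.mem_of_mem_take hx)).1 hx

theorem sum_take_idxOf_add_le (f : α → ℕ) {l : List α} {x y : α} (hx : x ∈ l)
    (hxy : l.idxOf x < l.idxOf y) :
    ((l.take (l.idxOf x)).map f).sum + f x ≤ ((l.take (l.idxOf y)).map f).sum := by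
  have hlt : l.idxOf x < l.length := List.idxOf_lt_length_iff.2 hx
  have hsucc : l.take (l.idxOf x + 1) = l.take (l.idxOf x) ++ [x] := by
    rw [List.take_add_one, List.getElem?_eq_getElem hlt, List.getElem_idxOf hlt]
    rfl
  calc ((l.take (l.idxOf x)).map f).sum + f x = ((l.take (l.idxOf x + 1)).map f).sum := by
        simp [hsucc]
    _ ≤ ((l.take (l.idxOf y)).map f).sum :=
        ((List.take_prefix_take_left hxy).sublist.map f).sum_le_sum fun _ _ => Nat.zero_le _

theorem idxOf_lt_idxOf_iff_filter (p : α → Bool) {L : List α} {x y : α}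
    (hx : x ∈ L) (hy : y ∈ L) (hpx : p x) (hpy : p y) :
    L.idxOf x < L.idxOf y ↔ (L.filter p).idxOf x < (L.filter p).idxOf y := by
  induction L with
  | nil => simp at hx
  | cons a l ih =>
    by_cases hax : a = x
    · subst hax
      by_cases hay : a = y
      · simp [hay]
      · simp [List.filter_cons_of_pos hpx, List.idxOf_cons_ne _ hay]
    by_cases hay : a = y
    · subst hay
      simp [List.filter_cons_of_pos hpy, List.idxOf_cons_ne _ hax]
    have ih := ih (List.mem_of_ne_of_mem (Ne.symm hax) hx)
      (List.mem_of_ne_of_mem (Ne.symm hay) hy)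
    rw [List.idxOf_cons_ne l hax, List.idxOf_cons_ne l hay, List.filter_cons]
    split <;> simp [List.idxOf_cons_ne _ hax, List.idxOf_cons_ne _ hay, ih]

theorem idxOf_flatMap_lt_of_idxOf_lt [DecidableEq β] {L : List α} {g : α → List β}
    (hnd : (L.flatMap g).Nodup) {a b : α} {x y : β} (ha : a ∈ L) (hb : b ∈ L)
    (hx : x ∈ g a) (hy : y ∈ g b) (hab : L.idxOf a < L.idxOf b) :
    (L.flatMap g).idxOf x < (L.flatMap g).idxOf y := by
  rw [← List.take_append_drop (L.idxOf b) L, List.flatMap_append] at hnd ⊢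
  refine idxOf_append_lt_idxOf_append hnd (List.mem_flatMap.2 ⟨a, ?_, hx⟩)
    (List.mem_flatMap.2 ⟨b, ?_, hy⟩)
  · exact (List.mem_take_iff_idxOf_lt ha).2 hab
  · have hlt := List.idxOf_lt_length_iff.2 hb
    rw [List.drop_eq_getElem_cons hlt, List.getElem_idxOf hlt]
    exact List.mem_cons_self

end Lists

section BreadthFirstOrder

variable {V : Type} {T : PreTree V}

theorem topAnc_eq_some_iff (hT : IsTree T) {w c : V} :
    topAnc T w = some c ↔ subtreeRoot T w = c := by
  rw [topAnc_eq_subtreeRoot hT, Option.some_inj]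

theorem mem_expand (hT : IsTree T) {L : List V} {w : V} :
    w ∈ expand T L ↔ ∃ x ∈ L, T.parent w = some x := by
  simp only [expand, List.mem_flatMap, hT.mem_children_iff]

/-- The `k`-th level (the nodes of depth `k + 1`) of the subtree rooted at `c`, in
breadth-first order. -/
def level (T : PreTree V) (c : V) (k : ℕ) : List V := (expand T)^[k] [c]

theorem level_succ (T : PreTree V) (c : V) (k : ℕ) :
    level T c (k + 1) = expand T (level T c k) :=
  Function.iterate_succ_apply' _ _ _

theorem mem_level (hT : IsTree T) {c : V} (hc : T.parent c = none) {k : ℕ} {w : V} :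
    w ∈ level T c k ↔ subtreeRoot T w = c ∧ depth T w = k + 1 := by
  induction k generalizing w with
  | zero =>
    simp only [level, Function.iterate_zero, id_eq, List.mem_singleton, zero_add,
      depth_eq_one_iff hT]
    constructor
    · rintro rfl
      exact ⟨(topAnc_eq_some_iff hT).1 (topAnc_eq_self hT hc), hc⟩
    · rintro ⟨rfl, hw⟩
      exact ((topAnc_eq_some_iff hT).1 (topAnc_eq_self hT hw)).symm
  | succ k ih =>
    rw [level_succ, mem_expand hT]
    constructor
    · rintro ⟨x, hx, hpw⟩
      obtain ⟨rfl, hdx⟩ := ih.1 hx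
      exact ⟨subtreeRoot_eq_of_parent_eq_some hT hpw,
        by rw [depth_eq_of_parent_eq_some hT hpw, hdx]⟩
    · rintro ⟨rfl, hdw⟩
      cases hpw : T.parent w with
      | none => have := (depth_eq_one_iff hT).2 hpw; omega
      | some p =>
        have := depth_eq_of_parent_eq_some hT hpw
        exact ⟨p, ih.2 ⟨(subtreeRoot_eq_of_parent_eq_some hT hpw).symm, by omega⟩, rfl⟩

theorem mem_level_subtreeRoot (hT : IsTree T) (v : V) :
    v ∈ level T (subtreeRoot T v) (depth T v - 1) :=
  (mem_level hT (parent_subtreeRoot hT v)).2 ⟨rfl, by have := depth_pos hT v; omega⟩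

theorem nodup_level (hT : IsTree T) (c : V) (k : ℕ) : (level T c k).Nodup := by
  induction k with
  | zero => exact List.nodup_singleton c
  | succ k ih =>
    rw [level_succ, expand, List.nodup_flatMap]
    refine ⟨fun x _ => hT.nodup_children (some x), ih.pairwise_of_forall_ne ?_⟩
    intro x _ y _ hxy w hwx hwy
    rw [hT.mem_children_iff] at hwx hwy
    exact hxy (Option.some_injective V (hwx.symm.trans hwy))

theorem subtreeRoot_mem_children_none (hT : IsTree T) (v : V) :
    subtreeRoot T v ∈ T.children none :=
  (hT.mem_children_iff _ _).2 (parent_subtreeRoot hT v)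

section

variable [Fintype V]

def subtreeList (T : PreTree V) (c : V) : List V :=
  (List.range (Fintype.card V + 1)).flatMap (level T c)

theorem bfoList_eq_flatMap (T : PreTree V) :
    bfoList T = (T.children none).flatMap (subtreeList T) := rfl

theorem mem_subtreeList (hT : IsTree T) {c : V} (hc : T.parent c = none) {w : V} :
    w ∈ subtreeList T c ↔ subtreeRoot T w = c := by
  simp only [subtreeList, List.mem_flatMap, List.mem_range, mem_level hT hc]
  constructor
  · rintro ⟨k, -, hw, -⟩
    exact hw
  · intro hw
    have := depth_pos hT w
    have := depth_le_card hT w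
    exact ⟨depth T w - 1, by omega, hw, by omega⟩

theorem mem_subtreeList_subtreeRoot (hT : IsTree T) (v : V) :
    v ∈ subtreeList T (subtreeRoot T v) :=
  (mem_subtreeList hT (parent_subtreeRoot hT v)).2 rfl

theorem nodup_subtreeList (hT : IsTree T) {c : V} (hc : T.parent c = none) :
    (subtreeList T c).Nodup := by
  rw [subtreeList, List.nodup_flatMap]
  refine ⟨fun k _ => nodup_level hT c k, List.nodup_range.pairwise_of_forall_ne ?_⟩
  intro k _ m _ hkm w hwk hwm
  have := ((mem_level hT hc).1 hwk).2
  have := ((mem_level hT hc).1 hwm).2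
  omega

theorem nodup_bfoList (hT : IsTree T) : (bfoList T).Nodup := by
  rw [bfoList_eq_flatMap, List.nodup_flatMap]
  refine ⟨fun c hc => nodup_subtreeList hT ((hT.mem_children_iff _ _).1 hc),
    (hT.nodup_children none).pairwise_of_forall_ne ?_⟩
  intro a ha b hb hab w hwa hwb
  rw [hT.mem_children_iff] at ha hb
  rw [mem_subtreeList hT ha] at hwa
  rw [mem_subtreeList hT hb] at hwb
  exact hab (hwa.symm.trans hwb)

end

variable [DecidableEq V]

noncomputable def levelIdx (T : PreTree V) (v : V) : ℕ :=
  (level T (subtreeRoot T v) (depth T v - 1)).idxOf v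

noncomputable def subtreeIdx (T : PreTree V) (v : V) : ℕ :=
  (T.children none).idxOf (subtreeRoot T v)

/-- The breadth-first order is the lexicographic order on (subtree index, depth, level index). -/
def BfoKeyLt (T : PreTree V) (x y : V) : Prop :=
  subtreeIdx T x < subtreeIdx T y ∨ (subtreeRoot T x = subtreeRoot T y ∧
    (depth T x < depth T y ∨ (depth T x = depth T y ∧ levelIdx T x < levelIdx T y)))

theorem bfoKeyLt_or_bfoKeyLt (hT : IsTree T) {x y : V} (hne : x ≠ y) :
    BfoKeyLt T x y ∨ BfoKeyLt T y x := by
  unfold BfoKeyLt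
  rcases lt_trichotomy (subtreeIdx T x) (subtreeIdx T y) with h | h | h
  · exact Or.inl (Or.inl h)
  · have hroot : subtreeRoot T x = subtreeRoot T y :=
      (List.idxOf_inj (subtreeRoot_mem_children_none hT x)).1 h
    rcases lt_trichotomy (depth T x) (depth T y) with hd | hd | hd
    · exact Or.inl (Or.inr ⟨hroot, Or.inl hd⟩)
    · rcases lt_trichotomy (levelIdx T x) (levelIdx T y) with hl | hl | hl
      · exact Or.inl (Or.inr ⟨hroot, Or.inr ⟨hd, hl⟩⟩)
      · rw [levelIdx, levelIdx, ← hroot, ← hd] at hl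
        exact absurd ((List.idxOf_inj (mem_level_subtreeRoot hT x)).1 hl) hne
      · exact Or.inr (Or.inr ⟨hroot.symm, Or.inr ⟨hd.symm, hl⟩⟩)
    · exact Or.inr (Or.inr ⟨hroot.symm, Or.inl hd⟩)
  · exact Or.inr (Or.inl h)

variable [Fintype V]

theorem idxOf_subtreeList_lt (hT : IsTree T) {x y : V}
    (hroot : subtreeRoot T x = subtreeRoot T y)
    (h : depth T x < depth T y ∨ (depth T x = depth T y ∧ levelIdx T x < levelIdx T y)) :
    (subtreeList T (subtreeRoot T y)).idxOf x < (subtreeList T (subtreeRoot T y)).idxOf y := by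
  have hx := mem_level_subtreeRoot hT x
  have hy := mem_level_subtreeRoot hT y
  rw [hroot] at hx
  have hnd := nodup_subtreeList hT (parent_subtreeRoot hT y)
  have hrange : ∀ v, depth T v - 1 < Fintype.card V + 1 := fun v => by
    have := depth_le_card hT v
    omega
  rcases h with hd | ⟨hd, hl⟩
  · refine idxOf_flatMap_lt_of_idxOf_lt hnd (List.mem_range.2 (hrange x))
      (List.mem_range.2 (hrange y)) hx hy ?_
    rw [idxOf_range (hrange x), idxOf_range (hrange y)]
    have := depth_pos hT x
    omega
  · rw [hd] at hx
    refine idxOf_flatMap_lt_of_idxOf_lt_of_mem hnd (List.mem_range.2 (hrange y)) hx hy ?_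
    rwa [levelIdx, levelIdx, hroot, hd] at hl

theorem bfo_lt_of_bfoKeyLt (hT : IsTree T) {x y : V} (h : BfoKeyLt T x y) :
    bfo T x < bfo T y := by
  suffices (bfoList T).idxOf x < (bfoList T).idxOf y by
    unfold bfo
    omega
  have hnd := nodup_bfoList hT
  rw [bfoList_eq_flatMap] at hnd ⊢
  have hx := mem_subtreeList_subtreeRoot hT x
  have hy := mem_subtreeList_subtreeRoot hT y
  rcases h with h | ⟨hroot, h⟩
  · exact idxOf_flatMap_lt_of_idxOf_lt hnd (subtreeRoot_mem_children_none hT x)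
      (subtreeRoot_mem_children_none hT y) hx hy h
  · rw [hroot] at hx
    exact idxOf_flatMap_lt_of_idxOf_lt_of_mem hnd (subtreeRoot_mem_children_none hT y) hx hy
      (idxOf_subtreeList_lt hT hroot h)

theorem bfoKeyLt_of_bfo_lt (hT : IsTree T) {x y : V} (h : bfo T x < bfo T y) :
    BfoKeyLt T x y :=
  (bfoKeyLt_or_bfoKeyLt hT (by rintro rfl; omega)).resolve_right fun h' =>
    (bfo_lt_of_bfoKeyLt hT h').not_gt h

theorem bfo_lt_or_gt_of_ne (hT : IsTree T) {x y : V} (hne : x ≠ y) :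
    bfo T x < bfo T y ∨ bfo T y < bfo T x :=
  (bfoKeyLt_or_bfoKeyLt hT hne).imp (bfo_lt_of_bfoKeyLt hT) (bfo_lt_of_bfoKeyLt hT)

theorem IsAncestor.bfo_le (hT : IsTree T) {v w : V} (hd : IsAncestor T v w) :
    bfo T v ≤ bfo T w := by
  obtain ⟨_ | k, hk⟩ := hd
  · rw [Option.some_injective V hk]
  · have := depth_eq_add_of_iterate_eq_some hT hk
    exact (bfo_lt_of_bfoKeyLt hT <| Or.inr
      ⟨(IsAncestor.subtreeRoot_eq hT ⟨_, hk⟩).symm, Or.inl (by omega)⟩).le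

end BreadthFirstOrder

section DepthPrime

variable {V : Type} [Fintype V] [DecidableEq V] {T : PreTree V}

/-- `Σ_{l < j} d(T_l)`, where `c` is the root of the `j`-th subtree `T_j`. -/
noncomputable def depthOffset (T : PreTree V) (c : V) : ℕ :=
  (((T.children none).take ((T.children none).idxOf c)).map (subtreeMaxDepth T)).sum

theorem depth'_eq (hT : IsTree T) (v : V) :
    depth' T v = depthOffset T (subtreeRoot T v) + depth T v := by
  rw [depth', topAnc_eq_subtreeRoot hT]
  dsimp only
  rw [takeWhile_ne_eq_take_idxOf]
  rfl

theorem depth_le_subtreeMaxDepth (hT : IsTree T) (v : V) :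
    depth T v ≤ subtreeMaxDepth T (subtreeRoot T v) :=
  Finset.le_sup_of_le (Finset.mem_univ v) (by simp [topAnc_eq_subtreeRoot hT])

theorem depthOffset_add_subtreeMaxDepth_le {a b : V} (ha : a ∈ T.children none)
    (hab : (T.children none).idxOf a < (T.children none).idxOf b) :
    depthOffset T a + subtreeMaxDepth T a ≤ depthOffset T b :=
  sum_take_idxOf_add_le _ ha hab

theorem depth'_le_of_bfo_lt (hT : IsTree T) {x y : V} (h : bfo T x < bfo T y) :
    depth' T x ≤ depth' T y := by
  rw [depth'_eq hT, depth'_eq hT]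
  rcases bfoKeyLt_of_bfo_lt hT h with h | ⟨hroot, h⟩
  · have := depthOffset_add_subtreeMaxDepth_le (subtreeRoot_mem_children_none hT x) h
    have := depth_le_subtreeMaxDepth hT x
    omega
  · rw [hroot]
    omega

theorem depth'_eq_of_parent_eq_some (hT : IsTree T) {v p : V} (h : T.parent v = some p) :
    depth' T v = depth' T p + 1 := by
  rw [depth'_eq hT, depth'_eq hT, subtreeRoot_eq_of_parent_eq_some hT h,
    depth_eq_of_parent_eq_some hT h, Nat.add_assoc]

theorem IsVBFS.depth'_lt (hT : IsTree T) {e : V × V} (h : IsVBFS T e) :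
    depth' T e.1 < depth' T e.2 := by
  obtain ⟨-, hne, hlt⟩ := h
  obtain ⟨p, hp⟩ := Option.ne_none_iff_exists'.1 hne
  rw [hp] at hlt
  rw [depth'_eq_of_parent_eq_some hT hp]
  exact Nat.lt_succ_of_le (depth'_le_of_bfo_lt hT hlt)

end DepthPrime

section Restructure

variable {V : Type} [DecidableEq V] {T : PreTree V} {u v : V}

theorem restructure_parent (T : PreTree V) (u v w : V) :
    (restructure T u v).parent w = if w = v then some u else T.parent w := rfl

theorem restructure_children (T : PreTree V) (u v : V) (w : Option V) :
    (restructure T u v).children w =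
      if w = some u then (T.children (some u)).erase v ++ [v] else (T.children w).erase v :=
  rfl

theorem iterate_restructure_of_not_isAncestor {w : V} (hw : ¬ IsAncestor T v w) (k : ℕ) :
    (parentStep (restructure T u v))^[k] (some w) = (parentStep T)^[k] (some w) := by
  induction k with
  | zero => rfl
  | succ k ih =>
    rw [Function.iterate_succ_apply', Function.iterate_succ_apply', ih]
    cases hx : (parentStep T)^[k] (some w) with
    | none => rfl
    | some x =>
      have hxv : x ≠ v := by
        rintro rfl
        exact hw ⟨k, hx⟩
      simp [restructure_parent, hxv]

theorem iterate_restructure_of_le (hT : IsTree T) {w : V} {k : ℕ}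
    (hk : (parentStep T)^[k] (some w) = some v) {j : ℕ} (hj : j ≤ k) :
    (parentStep (restructure T u v))^[j] (some w) = (parentStep T)^[j] (some w) := by
  induction j with
  | zero => rfl
  | succ j ih =>
    rw [Function.iterate_succ_apply', Function.iterate_succ_apply', ih (by omega)]
    obtain ⟨x, hx⟩ : ∃ x, (parentStep T)^[j] (some w) = some x := by
      refine exists_iterate_parentStep_eq_some hT ?_
      have := depth_eq_add_of_iterate_eq_some hT hk
      have := depth_pos hT v
      omega
    -- the path from `w` reaches `v` only after exactly `k` steps
    have hxv : x ≠ v := by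
      rintro rfl
      have := depth_eq_add_of_iterate_eq_some hT hk
      have := depth_eq_add_of_iterate_eq_some hT hx
      omega
    simp [hx, restructure_parent, hxv]

theorem iterate_restructure_eq_some (hT : IsTree T) {w : V} {k : ℕ}
    (hk : (parentStep T)^[k] (some w) = some v) :
    (parentStep (restructure T u v))^[k + 1] (some w) = some u := by
  rw [Function.iterate_succ_apply', iterate_restructure_of_le hT hk le_rfl, hk]
  simp [restructure_parent]

theorem IsTree.restructure (hT : IsTree T) (hvu : ¬ IsAncestor T v u) :
    IsTree (restructure T u v) where
  reachesRoot w := by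
    by_cases hw : IsAncestor T v w
    · obtain ⟨k, hk⟩ := hw
      refine ⟨depth T u + (k + 1), ?_⟩
      rw [Function.iterate_add_apply, iterate_restructure_eq_some hT hk,
        iterate_restructure_of_not_isAncestor hvu]
      exact iterate_depth_eq_none hT u
    · exact ⟨depth T w, by
        rw [iterate_restructure_of_not_isAncestor hw]; exact iterate_depth_eq_none hT w⟩
  nodup_children w := by
    rw [restructure_children]
    split
    · exact ((hT.nodup_children _).erase v).append (List.nodup_singleton v)
        (by simp [(hT.nodup_children _).mem_erase_iff])
    · exact (hT.nodup_children w).erase v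
  mem_children_iff w x := by
    rw [restructure_children, restructure_parent]
    by_cases hxv : x = v
    · subst hxv
      split <;> simp_all [(hT.nodup_children _).mem_erase_iff, eq_comm]
    · split <;> simp [List.mem_erase_of_ne hxv, hT.mem_children_iff, *]

theorem depth_restructure_of_not_isAncestor {w : V} (hw : ¬ IsAncestor T v w) :
    depth (restructure T u v) w = depth T w := by
  simp only [depth, iterate_restructure_of_not_isAncestor hw]

theorem topAnc_restructure_of_not_isAncestor {w : V} (hw : ¬ IsAncestor T v w) :
    topAnc (restructure T u v) w = topAnc T w := by
  rw [topAnc, topAnc, depth_restructure_of_not_isAncestor hw,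
    iterate_restructure_of_not_isAncestor hw]

theorem subtreeRoot_restructure_of_not_isAncestor {w : V} (hw : ¬ IsAncestor T v w) :
    subtreeRoot (restructure T u v) w = subtreeRoot T w := by
  rw [subtreeRoot, subtreeRoot, topAnc_restructure_of_not_isAncestor hw]

theorem depth_restructure_of_iterate_eq_some (hT : IsTree T) (hvu : ¬ IsAncestor T v u)
    {w : V} {k : ℕ} (hk : (parentStep T)^[k] (some w) = some v) :
    depth (restructure T u v) w = depth T u + (k + 1) := by
  rw [depth_eq_add_of_iterate_eq_some (hT.restructure hvu) (iterate_restructure_eq_some hT hk),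
    depth_restructure_of_not_isAncestor hvu]

theorem subtreeRoot_restructure_of_isAncestor (hT : IsTree T) (hvu : ¬ IsAncestor T v u)
    {w : V} (hw : IsAncestor T v w) :
    subtreeRoot (restructure T u v) w = subtreeRoot T u := by
  obtain ⟨k, hk⟩ := hw
  rw [subtreeRoot_eq_of_iterate_eq_some (hT.restructure hvu) (iterate_restructure_eq_some hT hk),
    subtreeRoot_restructure_of_not_isAncestor hvu]

theorem children_none_restructure (hT : IsTree T) (hv : T.parent v ≠ none) :
    (restructure T u v).children none = T.children none := by
  rw [restructure_children, if_neg (Option.some_ne_none u).symm]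
  exact List.erase_of_not_mem fun h => hv ((hT.mem_children_iff _ _).1 h)

open scoped Classical in
theorem filter_level_restructure (hT : IsTree T) (hvu : ¬ IsAncestor T v u) (c : V) (k : ℕ) :
    (level (restructure T u v) c k).filter (fun w => ¬ IsAncestor T v w) =
      (level T c k).filter (fun w => ¬ IsAncestor T v w) := by
  have hR := hT.restructure hvu
  -- below a descendant of `v` there are only descendants of `v`, in either tree
  have hdesc : ∀ {S : PreTree V}, IsTree S → (∀ x y, S.parent y = some x → y = v ∨
      T.parent y = some x) → ∀ x, IsAncestor T v x →
      (S.children (some x)).filter (fun w => ¬ IsAncestor T v w) = [] := by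
    intro S hS hpar x hx
    refine List.filter_eq_nil_iff.2 fun y hy => ?_
    rcases hpar x y ((hS.mem_children_iff _ _).1 hy) with rfl | hp
    · simpa using IsAncestor.refl T y
    · simpa using hx.of_parent_eq_some hp
  have hchildR : ∀ x y, (restructure T u v).parent y = some x →
      y = v ∨ T.parent y = some x := by
    intro x y h
    rw [restructure_parent] at h
    split_ifs at h with hy
    · exact Or.inl hy
    · exact Or.inr h
  induction k with
  | zero => rfl
  | succ k ih =>
    rw [level_succ, level_succ, expand, expand, List.filter_flatMap, List.filter_flatMap,
      ← flatMap_filter_eq_flatMap (p := fun w => ¬ IsAncestor T v w)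
        (l := level (restructure T u v) c k) fun x _ hx => hdesc hR hchildR x (by simpa using hx),
      ← flatMap_filter_eq_flatMap (p := fun w => ¬ IsAncestor T v w) (l := level T c k)
        fun x _ hx => hdesc hT (fun _ _ h => Or.inr h) x (by simpa using hx), ih]
    refine List.flatMap_congr fun x _ => ?_
    have hv : ¬ ¬ IsAncestor T v v := not_not.2 (IsAncestor.refl T v)
    rw [restructure_children]
    split_ifs with hxu
    · obtain rfl := Option.some_inj.1 hxu
      rw [List.filter_append, ← List.erase_filter, List.erase_of_not_mem (by simp [hv])]
      simp [hv]
    · rw [← List.erase_filter, List.erase_of_not_mem (by simp [hv])]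

theorem levelIdx_restructure_lt (hT : IsTree T) (hvu : ¬ IsAncestor T v u) {x y : V}
    (hx : ¬ IsAncestor T v x) (hy : ¬ IsAncestor T v y)
    (hroot : subtreeRoot T x = subtreeRoot T y) (hd : depth T x = depth T y)
    (h : levelIdx T x < levelIdx T y) :
    levelIdx (restructure T u v) x < levelIdx (restructure T u v) y := by
  classical
  have hR := hT.restructure hvu
  have hxT := mem_level_subtreeRoot hT x
  have hyT := mem_level_subtreeRoot hT y
  have hxR := mem_level_subtreeRoot hR x
  have hyR := mem_level_subtreeRoot hR y
  simp only [levelIdx, subtreeRoot_restructure_of_not_isAncestor hx,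
    subtreeRoot_restructure_of_not_isAncestor hy, depth_restructure_of_not_isAncestor hx,
    depth_restructure_of_not_isAncestor hy] at h hxR hyR ⊢
  rw [hroot, hd] at h hxT hxR ⊢
  have hpx : decide (¬ IsAncestor T v x) := by simpa
  have hpy : decide (¬ IsAncestor T v y) := by simpa
  rwa [idxOf_lt_idxOf_iff_filter (fun w => ¬ IsAncestor T v w) hxR hyR hpx hpy,
    filter_level_restructure hT hvu,
    ← idxOf_lt_idxOf_iff_filter (fun w => ¬ IsAncestor T v w) hxT hyT hpx hpy]

end Restructure

section RestructureDepth

variable {V : Type} [Fintype V] [DecidableEq V] {T : PreTree V} {u v : V}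

theorem IsVBFS.not_isAncestor (hT : IsTree T) (hv : IsVBFS T (u, v)) : ¬ IsAncestor T v u :=
  fun h => (h.bfo_le hT).not_gt hv.1

theorem IsVBFS.subtreeIdx_le (hT : IsTree T) (hv : IsVBFS T (u, v)) :
    subtreeIdx T u ≤ subtreeIdx T v := by
  rcases bfoKeyLt_of_bfo_lt hT hv.1 with h | ⟨h, -⟩
  · exact h.le
  · rw [subtreeIdx, subtreeIdx, h]

theorem subtreeMaxDepth_restructure_eq (hT : IsTree T) (hvu : ¬ IsAncestor T v u) {c : V}
    (hcu : c ≠ subtreeRoot T u) (hcv : c ≠ subtreeRoot T v) :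
    subtreeMaxDepth (restructure T u v) c = subtreeMaxDepth T c := by
  refine Finset.sup_congr rfl fun x _ => ?_
  by_cases hx : IsAncestor T v x
  · simp only [topAnc_eq_some_iff hT, topAnc_eq_some_iff (hT.restructure hvu),
      subtreeRoot_restructure_of_isAncestor hT hvu hx, hx.subtreeRoot_eq hT, hcu.symm, hcv.symm,
      if_false]
  · rw [topAnc_restructure_of_not_isAncestor hx, depth_restructure_of_not_isAncestor hx]

theorem subtreeMaxDepth_le_restructure (hT : IsTree T) {c : V} (hcv : c ≠ subtreeRoot T v) :
    subtreeMaxDepth T c ≤ subtreeMaxDepth (restructure T u v) c := by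
  refine Finset.sup_mono_fun fun x _ => ?_
  by_cases hx : topAnc T x = some c
  · have hxv : ¬ IsAncestor T v x := fun h =>
      hcv (((topAnc_eq_some_iff hT).1 hx).symm.trans (h.subtreeRoot_eq hT))
    rw [if_pos hx, if_pos (by rwa [topAnc_restructure_of_not_isAncestor hxv]),
      depth_restructure_of_not_isAncestor hxv]
  · rw [if_neg hx]
    exact Nat.zero_le _

theorem depth_sub_one_le_subtreeMaxDepth_restructure (hT : IsTree T) (hv : IsVBFS T (u, v)) :
    depth T v - 1 ≤ subtreeMaxDepth (restructure T u v) (subtreeRoot T v) := by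
  obtain ⟨p, hp⟩ : ∃ p, T.parent v = some p := Option.ne_none_iff_exists'.1 hv.2.1
  have hpv : ¬ IsAncestor T v p := fun h => by
    have := h.depth_le hT
    have := depth_eq_of_parent_eq_some hT hp
    omega
  have hle := depth_le_subtreeMaxDepth (hT.restructure (hv.not_isAncestor hT)) p
  rw [subtreeRoot_restructure_of_not_isAncestor hpv, ← subtreeRoot_eq_of_parent_eq_some hT hp,
    depth_restructure_of_not_isAncestor hpv] at hle
  have := depth_eq_of_parent_eq_some hT hp
  omega

theorem depthOffset_restructure_eq (hT : IsTree T) (hv : IsVBFS T (u, v)) {c : V}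
    (hc : (T.children none).idxOf c ≤ subtreeIdx T u) :
    depthOffset (restructure T u v) c = depthOffset T c := by
  rw [depthOffset, depthOffset, children_none_restructure hT hv.2.1]
  congr 1
  refine List.map_congr_left fun x hx => ?_
  have hx := idxOf_lt_of_mem_take_idxOf hx
  have := hv.subtreeIdx_le hT
  refine subtreeMaxDepth_restructure_eq hT (hv.not_isAncestor hT) ?_ ?_ <;>
    · rintro rfl
      simp only [subtreeIdx] at *
      omega

theorem depthOffset_le_restructure (hT : IsTree T) (hv : IsVBFS T (u, v)) {c : V}
    (hc : (T.children none).idxOf c ≤ subtreeIdx T v) :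
    depthOffset T c ≤ depthOffset (restructure T u v) c := by
  rw [depthOffset, depthOffset, children_none_restructure hT hv.2.1]
  refine List.sum_le_sum fun x hx => subtreeMaxDepth_le_restructure hT ?_
  have hx := idxOf_lt_of_mem_take_idxOf hx
  rintro rfl
  exact absurd hc (not_le.2 hx)

theorem depthOffset_restructure_of_gt (hT : IsTree T) (hv : IsVBFS T (u, v)) {c : V}
    (hc : subtreeIdx T v < (T.children none).idxOf c) :
    depthOffset T (subtreeRoot T v) + (depth T v - 1) ≤ depthOffset (restructure T u v) c := by
  have h := depthOffset_add_subtreeMaxDepth_le (T := restructure T u v)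
    (by rw [children_none_restructure hT hv.2.1]; exact subtreeRoot_mem_children_none hT v)
    (by rwa [children_none_restructure hT hv.2.1])
  have := depthOffset_le_restructure hT hv le_rfl
  have := depth_sub_one_le_subtreeMaxDepth_restructure hT hv
  omega

theorem depth'_restructure_of_isAncestor (hT : IsTree T) (hv : IsVBFS T (u, v)) {w : V}
    (hw : IsAncestor T v w) : depth' T u + 1 ≤ depth' (restructure T u v) w := by
  have hvu := hv.not_isAncestor hT
  obtain ⟨k, hk⟩ := hw
  rw [depth'_eq (hT.restructure hvu), subtreeRoot_restructure_of_isAncestor hT hvu ⟨k, hk⟩,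
    depthOffset_restructure_eq hT hv le_rfl, depth_restructure_of_iterate_eq_some hT hvu hk,
    depth'_eq hT]
  omega

theorem depth'_restructure_ge (hT : IsTree T) (hv : IsVBFS T (u, v)) (w : V) :
    min (depth' T w) (depth' T u + 1) ≤ depth' (restructure T u v) w := by
  by_cases hw : IsAncestor T v w
  · exact (min_le_right _ _).trans (depth'_restructure_of_isAncestor hT hv hw)
  have hvu := hv.not_isAncestor hT
  rw [depth'_eq (hT.restructure hvu), subtreeRoot_restructure_of_not_isAncestor hw,
    depth_restructure_of_not_isAncestor hw]
  rcases le_or_gt (subtreeIdx T w) (subtreeIdx T u) with hwu | hwu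
  · rw [depthOffset_restructure_eq hT hv hwu, ← depth'_eq hT]
    exact min_le_left _ _
  rcases le_or_gt (subtreeIdx T w) (subtreeIdx T v) with hwv | hwv
  · have := depthOffset_le_restructure hT hv hwv
    have := depth'_eq hT w
    have := min_le_left (depth' T w) (depth' T u + 1)
    omega
  · -- the offset of a subtree after that of `v` still accounts for the parent of `v`
    have := depthOffset_restructure_of_gt hT hv hwv
    have huv : depth' T u < depth' T v := hv.depth'_lt hT
    have := depth'_eq hT v
    have := depth_pos hT v
    have := depth_pos hT w
    have := min_le_right (depth' T w) (depth' T u + 1)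
    omega

end RestructureDepth

section RestructureOrder

variable {V : Type} [Fintype V] [DecidableEq V] {T : PreTree V} {u v : V}

theorem bfo_restructure_lt (hT : IsTree T) (hv : IsVBFS T (u, v)) {x y : V}
    (hx : ¬ IsAncestor T v x) (hy : ¬ IsAncestor T v y) (h : bfo T x < bfo T y) :
    bfo (restructure T u v) x < bfo (restructure T u v) y := by
  have hvu := hv.not_isAncestor hT
  have hidx : ∀ w, ¬ IsAncestor T v w → subtreeIdx (restructure T u v) w = subtreeIdx T w := by
    intro w hw
    rw [subtreeIdx, subtreeIdx, children_none_restructure hT hv.2.1,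
      subtreeRoot_restructure_of_not_isAncestor hw]
  refine bfo_lt_of_bfoKeyLt (hT.restructure hvu) ?_
  simp only [BfoKeyLt, hidx x hx, hidx y hy, subtreeRoot_restructure_of_not_isAncestor hx,
    subtreeRoot_restructure_of_not_isAncestor hy, depth_restructure_of_not_isAncestor hx,
    depth_restructure_of_not_isAncestor hy]
  rcases bfoKeyLt_of_bfo_lt hT h with h | ⟨hroot, h | ⟨hd, hl⟩⟩
  · exact Or.inl h
  · exact Or.inr ⟨hroot, Or.inl h⟩
  · exact Or.inr ⟨hroot, Or.inr ⟨hd, levelIdx_restructure_lt hT hvu hx hy hroot hd hl⟩⟩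

theorem bfo_lt_of_bfo_restructure_lt (hT : IsTree T) (hv : IsVBFS T (u, v)) {x y : V}
    (hx : ¬ IsAncestor T v x) (hy : ¬ IsAncestor T v y)
    (h : bfo (restructure T u v) x < bfo (restructure T u v) y) : bfo T x < bfo T y :=
  (bfo_lt_or_gt_of_ne hT (by rintro rfl; omega)).resolve_right fun h' =>
    (bfo_restructure_lt hT hv hy hx h').not_gt h

theorem depth'_restructure_of_bfo_lt (hT : IsTree T) (hv : IsVBFS T (u, v)) {a : V}
    (ha : bfo T v < bfo T a) : depth' T u + 1 ≤ depth' (restructure T u v) a := by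
  have := depth'_restructure_ge hT hv a
  have := depth'_le_of_bfo_lt hT ha
  have huv : depth' T u < depth' T v := hv.depth'_lt hT
  omega

theorem IsVBFS.of_restructure_of_bfo_lt (hT : IsTree T) (hv : IsVBFS T (u, v)) {a b : V}
    (ha : ¬ IsAncestor T v a) (hav : bfo T a < bfo T v)
    (h : IsVBFS (restructure T u v) (a, b)) : IsVBFS T (a, b) := by
  obtain ⟨hab, hpb, hap⟩ := h
  by_cases hbv : b = v
  · subst hbv
    simp only [restructure_parent, if_true, bfoOpt] at hap
    exact ⟨hav, hv.2.1,
      (bfo_lt_of_bfo_restructure_lt hT hv ha (hv.not_isAncestor hT) hap).trans hv.2.2⟩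
  simp only [restructure_parent, if_neg hbv] at hpb hap
  obtain ⟨p, hp⟩ := Option.ne_none_iff_exists'.1 hpb
  simp only [hp, bfoOpt] at hap
  suffices bfo T a < bfo T b ∧ bfo T a < bfo T p from ⟨this.1, hpb, by rw [hp]; exact this.2⟩
  by_cases hb : IsAncestor T v b
  · exact ⟨hav.trans_le (hb.bfo_le hT), hav.trans_le ((hb.parent_eq_some hp hbv).bfo_le hT)⟩
  · have hp' : ¬ IsAncestor T v p := fun h => hb (h.of_parent_eq_some hp)
    exact ⟨bfo_lt_of_bfo_restructure_lt hT hv ha hb hab,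
      bfo_lt_of_bfo_restructure_lt hT hv ha hp' hap⟩

theorem IsVBFS.of_restructure (hT : IsTree T) (hv : IsVBFS T (u, v)) {a b : V}
    (h : IsVBFS (restructure T u v) (a, b)) :
    IsVBFS T (a, b) ∨ depth' T u + 1 ≤ depth' (restructure T u v) a := by
  by_cases ha : IsAncestor T v a
  · exact Or.inr (depth'_restructure_of_isAncestor hT hv ha)
  have hav : a ≠ v := by
    rintro rfl
    exact ha (IsAncestor.refl T a)
  rcases bfo_lt_or_gt_of_ne hT hav with hav | hva
  · exact Or.inl (hv.of_restructure_of_bfo_lt hT ha hav h)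
  · exact Or.inr (depth'_restructure_of_bfo_lt hT hv hva)

end RestructureOrder

section Invariant

variable {V : Type} [Fintype V] [DecidableEq V] {E : Finset (V × V)} {j : ℕ}
  {done : List (V × V)} {T : PreTree V}

theorem not_isVBFS_restructure (T : PreTree V) (u v : V) :
    ¬ IsVBFS (restructure T u v) (u, v) := fun h => by
  simpa [IsVBFS, restructure_parent, bfoOpt] using h.2.2

def PassInvariant (E : Finset (V × V)) (j : ℕ) (done : List (V × V)) (T : PreTree V) : Prop :=
  IsTree T ∧
    ∀ f ∈ E, IsVBFS T f → j ≤ depth' T f.1 + 1 ∧ (f ∈ done → j ≤ depth' T f.1)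

theorem PassInvariant.step (h : PassInvariant E j done T) {e : V × V} (he : e ∈ E) :
    PassInvariant E j (done ++ [e]) (if IsVBFS T e then restructure T e.1 e.2 else T) := by
  obtain ⟨hT, hinv⟩ := h
  split_ifs with hv
  · obtain ⟨u, v⟩ := e
    have hju : j ≤ depth' T u + 1 := (hinv _ he hv).1
    refine ⟨hT.restructure (hv.not_isAncestor hT), fun ⟨a, b⟩ hf hf' => ?_⟩
    have hne : (a, b) ≠ (u, v) := by
      intro heq
      rw [heq] at hf'
      exact not_isVBFS_restructure T u v hf'
    dsimp only
    rcases hv.of_restructure hT hf' with hold | hdeep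
    · have hmin := depth'_restructure_ge hT hv a
      obtain ⟨hj, hjdone⟩ : j ≤ depth' T a + 1 ∧ ((a, b) ∈ done → j ≤ depth' T a) :=
        hinv _ hf hold
      refine ⟨by omega, fun hmem => ?_⟩
      have := hjdone (by simpa [hne] using hmem)
      omega
    · omega
  · refine ⟨hT, fun f hf hf' => ⟨(hinv f hf hf').1, fun hmem => ?_⟩⟩
    rcases List.mem_append.1 hmem with hmem | hmem
    · exact (hinv f hf hf').2 hmem
    · rw [List.mem_singleton.1 hmem] at hf'
      exact absurd hf' hv

theorem PassInvariant.scan (h : PassInvariant E j done T) {L : List (V × V)}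
    (hL : ∀ e ∈ L, e ∈ E) : PassInvariant E j (done ++ L) (EEscan L T) := by
  induction L generalizing done T with
  | nil => simpa [EEscan] using h
  | cons e L ih =>
    have := ih (h.step (hL e List.mem_cons_self)) fun f hf => hL f (List.mem_cons_of_mem e hf)
    simpa [EEscan] using this

theorem PassInvariant.next (h : PassInvariant E j done T) (hdone : ∀ f ∈ E, f ∈ done) :
    PassInvariant E (j + 1) [] T :=
  ⟨h.1, fun f hf hf' => ⟨by have := (h.2 f hf hf').2 (hdone f hf); omega, by simp⟩⟩

theorem passInvariant_init (hT0 : IsInitTree T) : PassInvariant E 1 [] T := by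
  obtain ⟨hroot, hnodup, hmem, hleaf⟩ := hT0
  refine ⟨⟨fun v => ⟨1, by simp [hroot v]⟩, ?_, ?_⟩,
    fun f _ _ => ⟨by omega, by simp⟩⟩
  · rintro (_ | w)
    · exact hnodup
    · simp [hleaf w]
  · rintro (_ | w) v
    · simp [hmem v, hroot v]
    · simp [hleaf w, hroot v]

theorem passInvariant_iterate_EEstep {EL : List (V × V)} (hEL : IsEnum E EL) {T0 : PreTree V}
    (hT0 : IsInitTree T0) (m : ℕ) : PassInvariant E (m + 1) [] ((EEstep EL)^[m] T0) := by
  induction m with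
  | zero => exact passInvariant_init hT0
  | succ m ih =>
    rw [Function.iterate_succ_apply']
    exact (ih.scan fun e he => (hEL.2 e).1 he).next fun f hf => by simpa using (hEL.2 f).2 hf

end Invariant

theorem stmt11_general {V : Type} [Fintype V] [DecidableEq V]
    (E : Finset (V × V))
    (EL : List (V × V)) (hEL : IsEnum E EL)
    (T0 : PreTree V) (hT0 : IsInitTree T0) :
    ∀ i j : ℕ, 1 ≤ i → i < j → ∀ p ≤ EL.length,
      ∀ e ∈ E,
        depth' (EEscan (EL.take p) ((EEstep EL)^[j - 1] T0)) e.1 ≤ i →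
        depth' (EEscan (EL.take p) ((EEstep EL)^[j - 1] T0)) e.2 ≤ i →
        ¬ IsVBFS (EEscan (EL.take p) ((EEstep EL)^[j - 1] T0)) e := by
  intro i j _ hij p _ e he _ hd hVB
  have hinv := (passInvariant_iterate_EEstep hEL hT0 (j - 1)).scan (L := EL.take p)
    fun f hf => (hEL.2 f).1 (List.mem_of_mem_take hf)
  have hj := (hinv.2 e he hVB).1
  have hlt := hVB.depth'_lt hinv.1
  omega

theorem stmt11 {V : Type} [Fintype V] [DecidableEq V]
    (hV : 1 ≤ Fintype.card V) (E : Finset (V × V))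
    (hE : ∀ e ∈ E, e.1 ≠ e.2)
    (EL : List (V × V)) (hEL : IsEnum E EL)
    (T0 : PreTree V) (hT0 : IsInitTree T0) :
    ∀ i j : ℕ, 1 ≤ i → i < j → ∀ p ≤ EL.length,
      ∀ e ∈ E,
        depth' (EEscan (EL.take p) ((EEstep EL)^[j - 1] T0)) e.1 ≤ i →
        depth' (EEscan (EL.take p) ((EEstep EL)^[j - 1] T0)) e.2 ≤ i →
        ¬ IsVBFS (EEscan (EL.take p) ((EEstep EL)^[j - 1] T0)) e :=
  stmt11_general E EL hEL T0 hT0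

end BFSFormal
end
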